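/- arXiv:2511.22196 — 8 statements merged into one kernel-verified Lean document; each statement's English description precedes it below -/
import Mathlib

section
/- Every basic tree-decomposition of a graph is refined, i.e., it is normal and admits no proper refinement. -/
open SimpleGraph

/-- A (finite) tree-decomposition of a graph `G`: a nonempty finite tree `tree` on node
type `ι` with bags `bag x ⊆ V(G)` such that every edge of `G` lies in some bag and for
each vertex `v` the set of nodes whose bags contain `v` induces a nonempty connected
subtree. -/
structure TreeDecomp {V : Type*} (G : SimpleGraph V) where
  ι : Type
  fint : Fintype ι
  nonempty : Nonempty ι
  tree : SimpleGraph ι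
  isTree : tree.IsTree
  bag : ι → Finset V
  edge_mem : ∀ ⦃v w : V⦄, G.Adj v w → ∃ x, v ∈ bag x ∧ w ∈ bag x
  support_conn : ∀ v : V, (tree.induce {x : ι | v ∈ bag x}).Connected

/-- The tree-decomposition has width at most `w`. -/
def TreeDecomp.widthLE {V : Type*} {G : SimpleGraph V} (D : TreeDecomp G) (w : ℕ) : Prop :=
  ∀ x : D.ι, (D.bag x).card ≤ w + 1

/-- The treewidth of `G`: minimum width over all tree-decompositions. -/
noncomputable def treewidth {V : Type*} (G : SimpleGraph V) : ℕ :=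
  sInf {w : ℕ | ∃ D : TreeDecomp G, D.widthLE w}

/-- A tree-decomposition is normal if no bag is contained in the bag of an adjacent node. -/
def TreeDecomp.Normal {V : Type*} {G : SimpleGraph V} (D : TreeDecomp G) : Prop :=
  ∀ ⦃x y : D.ι⦄, D.tree.Adj x y → ¬ D.bag x ⊆ D.bag y

/-- The number of bags of `D` of size `i`. -/
noncomputable def TreeDecomp.nbags {V : Type*} {G : SimpleGraph V} (D : TreeDecomp G)
    (i : ℕ) : ℕ :=
  Nat.card {x : D.ι // (D.bag x).card = i}

/-- `N(D')` is lexicographically smaller than `N(D)`, reading bag sizes from largest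
to smallest: for some size `i`, `D'` has fewer bags of size `i` and the same number of
bags of each larger size. -/
def NLt {V : Type*} {G : SimpleGraph V} (D' D : TreeDecomp G) : Prop :=
  ∃ i : ℕ, D'.nbags i < D.nbags i ∧ ∀ j : ℕ, i < j → D'.nbags j = D.nbags j

/-- `D` is basic: no tree-decomposition is lexicographically smaller. -/
def Basic {V : Type*} {G : SimpleGraph V} (D : TreeDecomp G) : Prop :=
  ∀ D' : TreeDecomp G, ¬ NLt D' D

/-- `D'` is a refinement of `D`: every bag of `D'` is a subset of some bag of `D`. -/
def Refines {V : Type*} {G : SimpleGraph V} (D' D : TreeDecomp G) : Prop :=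
  ∀ x : D'.ι, ∃ y : D.ι, D'.bag x ⊆ D.bag y

def ProperRefinement {V : Type*} {G : SimpleGraph V} (D' D : TreeDecomp G) : Prop :=
  Refines D' D ∧ ¬ Refines D D'

/-- A tree-decomposition is refined if it is normal and has no proper refinement. -/
def Refined {V : Type*} {G : SimpleGraph V} (D : TreeDecomp G) : Prop :=
  D.Normal ∧ ¬ ∃ D' : TreeDecomp G, ProperRefinement D' D

section Aux

variable {V : Type*} {G : SimpleGraph V}

lemma refines_trans {A B C : TreeDecomp G} (h1 : Refines A B) (h2 : Refines B C) :
    Refines A C := by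
  intro x
  obtain ⟨y, hy⟩ := h1 x
  obtain ⟨z, hz⟩ := h2 y
  exact ⟨z, hy.trans hz⟩

lemma reach_map {α β : Type*} {Gα : SimpleGraph α} {Gβ : SimpleGraph β} (g : α → β)
    (hg : ∀ u v, Gα.Adj u v → Gβ.Reachable (g u) (g v)) {u v : α} (h : Gα.Reachable u v) :
    Gβ.Reachable (g u) (g v) := by
  obtain ⟨w⟩ := h
  induction w with
  | nil => exact Reachable.refl _
  | cons h q ih => exact (hg _ _ h).trans ih

lemma walk_induce {α : Type*} {Gα : SimpleGraph α} {s : Set α} {a b : s}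
    (W : (Gα.induce s).Walk a b) :
    ∃ W' : Gα.Walk a.1 b.1, ∀ c ∈ W'.support, c ∈ s := by
  induction W with
  | nil => exact ⟨Walk.nil, by simp⟩
  | @cons x y z h q ih =>
    obtain ⟨W', hW'⟩ := ih
    have hadj : Gα.Adj x.1 y.1 := by simpa using h
    refine ⟨Walk.cons hadj W', ?_⟩
    intro c hc
    rw [Walk.support_cons] at hc
    rcases List.mem_cons.mp hc with rfl | hc
    · exact x.2
    · exact hW' c hc

/-- In a normal tree-decomposition, distinct bags are incomparable. -/
lemma normal_antichain (E : TreeDecomp G) (hE : E.Normal) {x y : E.ι} (hxy : x ≠ y)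
    (hsub : E.bag x ⊆ E.bag y) : False := by
  classical
  obtain ⟨P, hPp, hPu⟩ := E.isTree.existsUnique_path x y
  cases P with
  | nil => exact hxy rfl
  | @cons _ z _ hadj Q =>
    apply hE hadj
    intro v hvx
    have hvy : v ∈ E.bag y := hsub hvx
    obtain ⟨W0⟩ := (E.support_conn v).preconnected ⟨x, hvx⟩ ⟨y, hvy⟩
    obtain ⟨W, hWmem⟩ := walk_induce W0
    have hWP : (W.toPath : E.tree.Walk x y) = Walk.cons hadj Q := hPu _ W.toPath.2
    have hz : z ∈ (W.toPath : E.tree.Walk x y).support := by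
      rw [hWP, Walk.support_cons]
      exact List.mem_cons_of_mem _ Q.start_mem_support
    exact hWmem z (W.support_toPath_subset hz)

/-- Contracting an edge `x0 y0` of the decomposition tree when `bag x0 ⊆ bag y0`. -/
lemma contract_exists (D : TreeDecomp G) {x0 y0 : D.ι}
    (hadj : D.tree.Adj x0 y0) (hsub : D.bag x0 ⊆ D.bag y0) :
    ∃ E : TreeDecomp G, Refines E D ∧ NLt E D ∧ Nat.card E.ι < Nat.card D.ι := by
  letI : Fintype D.ι := D.fint
  classical
  set ι' := {z : D.ι // z ≠ x0} with hι'
  let y0' : ι' := ⟨y0, hadj.ne'⟩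
  let p : D.ι → ι' := fun z => if h : z = x0 then y0' else ⟨z, h⟩
  have hpx0 : p x0 = y0' := dif_pos rfl
  have hpz : ∀ (z : D.ι) (h : z ≠ x0), p z = ⟨z, h⟩ := fun z h => dif_neg h
  have hpval : ∀ a : ι', p a.1 = a := fun a => by rw [hpz a.1 a.2]
  let T : SimpleGraph ι' :=
    { Adj := fun a b => a ≠ b ∧ ∃ u v, D.tree.Adj u v ∧ p u = a ∧ p v = b
      symm := ⟨by
        rintro a b ⟨hne, u, v, h, hu, hv⟩
        exact ⟨hne.symm, v, u, h.symm, hv, hu⟩⟩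
      loopless := ⟨fun a h => h.1 rfl⟩ }
  have hstep : ∀ u v : D.ι, D.tree.Adj u v → T.Reachable (p u) (p v) := by
    intro u v h
    by_cases heq : p u = p v
    · rw [heq]
    · exact Adj.reachable ⟨heq, u, v, h, rfl, rfl⟩
  haveI : Nonempty ι' := ⟨y0'⟩
  have hTconn : T.Connected := by
    refine Connected.mk fun a b => ?_
    have h := D.isTree.isConnected.preconnected a.1 b.1
    have := reach_map p hstep h
    rwa [hpval, hpval] at this
  have hTacyclic : T.IsAcyclic := by
    rw [isAcyclic_iff_forall_adj_isBridge]
    rintro a b hab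
    obtain ⟨hne, u0, v0, h0, hu0, hv0⟩ := hab
    rw [isBridge_iff]
    have hDb : ¬ (D.tree \ fromEdgeSet {s(u0, v0)}).Reachable u0 v0 :=
      (isBridge_iff.mp ((isAcyclic_iff_forall_adj_isBridge.mp D.isTree.IsAcyclic) h0))
    intro hreach
    apply hDb
    have hxyne : s(x0, y0) ≠ s(u0, v0) := by
      intro h
      rw [Sym2.eq_iff] at h
      rcases h with ⟨h1, h2⟩ | ⟨h1, h2⟩
      · exact hne (by rw [← hu0, ← hv0, ← h1, ← h2, hpx0, hpz y0 hadj.ne'])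
      · exact hne (by rw [← hu0, ← hv0, ← h1, ← h2, hpx0, hpz y0 hadj.ne'])
    -- edge (x0,y0) survives
    have hK_xy : (D.tree \ fromEdgeSet {s(x0, y0)}).Adj x0 y0 → True := fun _ => trivial
    have hKadj_xy : (D.tree \ fromEdgeSet {s(u0, v0)}).Adj x0 y0 := by
      rw [sdiff_adj, fromEdgeSet_adj]
      exact ⟨hadj, by simp [hxyne]⟩
    have hfix : ∀ (w : D.ι) (c : ι'), p w = c →
        (D.tree \ fromEdgeSet {s(u0, v0)}).Reachable w c.1 := by
      intro w c hw
      by_cases hwx : w = x0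
      · subst hwx
        rw [hpx0] at hw
        rw [← hw]
        exact hKadj_xy.reachable
      · rw [hpz w hwx] at hw
        rw [← hw]
    have hK : ∀ c d : ι', (T \ fromEdgeSet {s(a, b)}).Adj c d →
        (D.tree \ fromEdgeSet {s(u0, v0)}).Reachable c.1 d.1 := by
      rintro c d ⟨⟨hne', u, v, huv, hu, hv⟩, hnotmem⟩
      have hcd : s(c, d) ≠ s(a, b) := by
        intro h
        exact hnotmem (by rw [fromEdgeSet_adj]; exact ⟨by simp [h], hne'⟩)
      have huvne : s(u, v) ≠ s(u0, v0) := by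
        intro h
        rw [Sym2.eq_iff] at h
        rcases h with ⟨h1, h2⟩ | ⟨h1, h2⟩
        · exact hcd (by rw [← hu, ← hv, h1, h2, hu0, hv0])
        · exact hcd (by rw [← hu, ← hv, h1, h2, hu0, hv0, Sym2.eq_swap])
      have hKuv : (D.tree \ fromEdgeSet {s(u0, v0)}).Adj u v := by
        rw [sdiff_adj, fromEdgeSet_adj]
        exact ⟨huv, by simp [huvne]⟩
      exact ((hfix u c hu).symm.trans hKuv.reachable).trans (hfix v d hv)
    have hmain := reach_map (Gα := T \ fromEdgeSet {s(a, b)})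
      (Gβ := D.tree \ fromEdgeSet {s(u0, v0)}) Subtype.val hK hreach
    exact ((hfix u0 a hu0).trans hmain).trans (hfix v0 b hv0).symm
  refine ⟨{ ι := ι'
            fint := inferInstance
            nonempty := ⟨y0'⟩
            tree := T
            isTree := ⟨hTconn, hTacyclic⟩
            bag := fun a => D.bag a.1
            edge_mem := ?_
            support_conn := ?_ }, ?_, ?_, ?_⟩
  · intro v w h
    obtain ⟨z, hv, hw⟩ := D.edge_mem h
    by_cases hz : z = x0
    · subst hz
      exact ⟨y0', hsub hv, hsub hw⟩
    · exact ⟨⟨z, hz⟩, hv, hw⟩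
  · intro v
    set S : Set D.ι := {z : D.ι | v ∈ D.bag z} with hS
    set S' : Set ι' := {a : ι' | v ∈ D.bag a.1} with hS'
    have g_mem : ∀ z : S, v ∈ D.bag ((p z.1).1 : D.ι) := by
      intro z
      by_cases hz : z.1 = x0
      · rw [hz, hpx0]
        exact hsub (by rw [← hz]; exact z.2)
      · rw [hpz z.1 hz]
        exact z.2
    let g : S → S' := fun z => ⟨p z.1, g_mem z⟩
    have hg : ∀ z w : S, (D.tree.induce S).Adj z w →
        (T.induce S').Reachable (g z) (g w) := by
      intro z w h
      have hzw : D.tree.Adj z.1 w.1 := by simpa using h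
      by_cases heq : p z.1 = p w.1
      · have : g z = g w := Subtype.ext heq
        rw [this]
      · refine Adj.reachable ?_
        simp only [comap_adj, Function.Embedding.coe_subtype]
        exact ⟨heq, z.1, w.1, hzw, rfl, rfl⟩
    haveI : Nonempty ↥S' := by
      obtain ⟨z⟩ := (D.support_conn v).nonempty
      by_cases hz : z.1 = x0
      · exact ⟨⟨y0', hsub (by rw [← hz]; exact z.2)⟩⟩
      · exact ⟨⟨⟨z.1, hz⟩, z.2⟩⟩
    refine Connected.mk fun a b => ?_
    have ha : (a.1.1 : D.ι) ∈ S := a.2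
    have hb : (b.1.1 : D.ι) ∈ S := b.2
    have h := (D.support_conn v).preconnected ⟨a.1.1, ha⟩ ⟨b.1.1, hb⟩
    have h2 := reach_map g hg h
    have hga : g ⟨a.1.1, ha⟩ = a := Subtype.ext (hpval a.1)
    have hgb : g ⟨b.1.1, hb⟩ = b := Subtype.ext (hpval b.1)
    rwa [hga, hgb] at h2
  · exact fun a => ⟨a.1, subset_rfl⟩
  · -- NLt
    have hcount : ∀ i : ℕ,
        Nat.card {a : ι' // (D.bag a.1).card = i} =
          ((Finset.univ.filter (fun z : D.ι => (D.bag z).card = i)).erase x0).card := by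
      intro i
      rw [Nat.card_eq_fintype_card]
      rw [Fintype.card_congr (Equiv.subtypeSubtypeEquivSubtypeInter
        (fun z : D.ι => z ≠ x0) (fun z => (D.bag z).card = i))]
      rw [Fintype.card_subtype]
      congr 1
      ext z
      simp [Finset.mem_erase, and_comm]
    have hcountD : ∀ i : ℕ, D.nbags i =
        (Finset.univ.filter (fun z : D.ι => (D.bag z).card = i)).card := by
      intro i
      rw [TreeDecomp.nbags, Nat.card_eq_fintype_card]
      convert Fintype.card_subtype (p := fun z : D.ι => (D.bag z).card = i)
    refine ⟨(D.bag x0).card, ?_, ?_⟩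
    · show Nat.card {a : ι' // (D.bag a.1).card = (D.bag x0).card} < _
      rw [hcount, hcountD]
      have hx0mem : x0 ∈ Finset.univ.filter (fun z : D.ι => (D.bag z).card = (D.bag x0).card) := by
        simp
      rw [Finset.card_erase_of_mem hx0mem]
      exact Nat.sub_lt (Finset.card_pos.mpr ⟨x0, hx0mem⟩) one_pos
    · intro j hj
      show Nat.card {a : ι' // (D.bag a.1).card = j} = _
      rw [hcount, hcountD]
      rw [Finset.erase_eq_of_notMem]
      simp only [Finset.mem_filter, Finset.mem_univ, true_and]
      omega
  · show Nat.card ι' < Nat.card D.ι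
    rw [Nat.card_eq_fintype_card, Nat.card_eq_fintype_card]
    exact Fintype.card_subtype_lt (x := x0) (by simp)

lemma exists_normal_refines :
    ∀ (n : ℕ) (E : TreeDecomp G), Nat.card E.ι ≤ n → ∃ F, F.Normal ∧ Refines F E := by
  intro n
  induction n with
  | zero =>
    intro E h
    letI : Fintype E.ι := E.fint
    haveI := E.nonempty
    have := Nat.card_pos (α := E.ι)
    omega
  | succ n ih =>
    intro E hcard
    by_cases hn : E.Normal
    · exact ⟨E, hn, fun x => ⟨x, subset_rfl⟩⟩
    · rw [TreeDecomp.Normal] at hn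
      push_neg at hn
      obtain ⟨x0, y0, hadj, hsub⟩ := hn
      obtain ⟨C, hrefC, _, hcardC⟩ := contract_exists E hadj hsub
      obtain ⟨F, hFn, hFr⟩ := ih C (by omega)
      exact ⟨F, hFn, refines_trans hFr hrefC⟩

lemma nlt_or_refines [Fintype V] {E D : TreeDecomp G} (hE : E.Normal)
    (hrefines : Refines E D) : NLt E D ∨ Refines D E := by
  letI : Fintype E.ι := E.fint
  letI : Fintype D.ι := D.fint
  classical
  choose f hf using hrefines
  have hanti : ∀ x y : E.ι, x ≠ y → ¬ E.bag x ⊆ E.bag y :=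
    fun x y hxy hsub => normal_antichain E hE hxy hsub
  set K := Fintype.card V with hK
  have hbag_le : ∀ (F : TreeDecomp G) (z : F.ι), (F.bag z).card ≤ K := by
    intro F z
    rw [hK, ← Finset.card_univ]
    exact Finset.card_le_card (Finset.subset_univ _)
  have hzero : ∀ (F : TreeDecomp G) (j : ℕ), K < j → F.nbags j = 0 := by
    intro F j hj
    rw [TreeDecomp.nbags]
    haveI : IsEmpty {x : F.ι // (F.bag x).card = j} :=
      ⟨fun x => by have := hbag_le F x.1; omega⟩
    exact Nat.card_of_isEmpty
  have tight : ∀ i : ℕ, (∀ y : D.ι, i < (D.bag y).card → ∃ x, E.bag x = D.bag y) →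
      ∀ x : E.ι, (E.bag x).card = i → E.bag x = D.bag (f x) := by
    intro i hQ x hx
    have h1 : i ≤ (D.bag (f x)).card := hx ▸ Finset.card_le_card (hf x)
    rcases eq_or_lt_of_le h1 with h | h
    · exact Finset.eq_of_subset_of_card_le (hf x) (by omega)
    · obtain ⟨z, hz⟩ := hQ (f x) h
      have hsub2 : E.bag x ⊆ E.bag z := hz ▸ hf x
      have hne : x ≠ z := by
        intro hxz
        rw [← hxz] at hz
        rw [hz] at hx
        omega
      exact absurd hsub2 (hanti x z hne)
  have inj_le : ∀ i : ℕ, (∀ y : D.ι, i < (D.bag y).card → ∃ x, E.bag x = D.bag y) →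
      E.nbags i ≤ D.nbags i ∧
        (E.nbags i = D.nbags i → ∀ y : D.ι, (D.bag y).card = i → ∃ x, E.bag x = D.bag y) := by
    intro i hQ
    have htight := tight i hQ
    let φ : {x : E.ι // (E.bag x).card = i} → {y : D.ι // (D.bag y).card = i} :=
      fun x => ⟨f x.1, by rw [← htight x.1 x.2]; exact x.2⟩
    have hφinj : Function.Injective φ := by
      rintro x1 x2 h
      have hfe : f x1.1 = f x2.1 := congrArg Subtype.val h
      have hb : E.bag x1.1 = E.bag x2.1 := by
        rw [htight x1.1 x1.2, htight x2.1 x2.2, hfe]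
      have : x1.1 = x2.1 := by
        by_contra hne
        exact hanti x1.1 x2.1 hne (le_of_eq hb)
      exact Subtype.ext this
    have hle : E.nbags i ≤ D.nbags i := by
      rw [TreeDecomp.nbags, TreeDecomp.nbags, Nat.card_eq_fintype_card, Nat.card_eq_fintype_card]
      exact Fintype.card_le_of_injective φ hφinj
    refine ⟨hle, ?_⟩
    intro heq y hy
    have hcard : Fintype.card {x : E.ι // (E.bag x).card = i} =
        Fintype.card {y : D.ι // (D.bag y).card = i} := by
      rw [TreeDecomp.nbags, TreeDecomp.nbags, Nat.card_eq_fintype_card,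
        Nat.card_eq_fintype_card] at heq
      exact heq
    have hφbij : Function.Bijective φ :=
      (Fintype.bijective_iff_injective_and_card φ).mpr ⟨hφinj, hcard⟩
    obtain ⟨x, hx⟩ := hφbij.2 ⟨y, hy⟩
    refine ⟨x.1, ?_⟩
    rw [htight x.1 x.2]
    rw [show f x.1 = y from congrArg Subtype.val hx]
  have Qall : ∀ (d i : ℕ), K ≤ i + d → (∀ j : ℕ, i < j → E.nbags j = D.nbags j) →
      ∀ y : D.ι, i < (D.bag y).card → ∃ x, E.bag x = D.bag y := by
    intro d
    induction d with
    | zero =>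
      intro i hKi _ y hy
      have := hbag_le D y
      omega
    | succ d ihd =>
      intro i hKi hyp y hy
      have hQ1 : ∀ y : D.ι, i + 1 < (D.bag y).card → ∃ x, E.bag x = D.bag y :=
        ihd (i + 1) (by omega) (fun j hj => hyp j (by omega))
      rcases Nat.lt_or_ge (i + 1) ((D.bag y).card) with h | h
      · exact hQ1 y h
      · have hcard : (D.bag y).card = i + 1 := by omega
        exact (inj_le (i + 1) hQ1).2 (hyp (i + 1) (by omega)) y hcard
  by_cases hall : ∀ i : ℕ, E.nbags i = D.nbags i
  · right
    intro y
    rcases Nat.eq_zero_or_pos (D.bag y).card with h | h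
    · obtain ⟨x⟩ := E.nonempty
      refine ⟨x, ?_⟩
      rw [Finset.card_eq_zero.mp h]
      exact Finset.empty_subset _
    · obtain ⟨x, hx⟩ := Qall K 0 (by omega) (fun j _ => hall j) y h
      exact ⟨x, le_of_eq hx.symm⟩
  · left
    push_neg at hall
    obtain ⟨i0, hi0⟩ := hall
    set S := (Finset.range (K + 1)).filter (fun i => E.nbags i ≠ D.nbags i) with hSdef
    have hSne : S.Nonempty := by
      refine ⟨i0, ?_⟩
      rw [hSdef, Finset.mem_filter, Finset.mem_range]
      refine ⟨?_, hi0⟩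
      by_contra h
      push_neg at h
      rw [hzero E i0 (by omega), hzero D i0 (by omega)] at hi0
      exact hi0 rfl
    set istar := S.max' hSne with histar
    have histarS : istar ∈ S := S.max'_mem hSne
    have hstar_ne : E.nbags istar ≠ D.nbags istar := by
      rw [hSdef] at histarS
      exact (Finset.mem_filter.mp histarS).2
    have hyp : ∀ j : ℕ, istar < j → E.nbags j = D.nbags j := by
      intro j hj
      by_cases hjK : K < j
      · rw [hzero E j hjK, hzero D j hjK]
      · by_contra hne
        have hjS : j ∈ S := by
          rw [hSdef, Finset.mem_filter, Finset.mem_range]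
          exact ⟨by omega, hne⟩
        have := S.le_max' j hjS
        omega
    have hQ := Qall K istar (by omega) hyp
    have hle := (inj_le istar hQ).1
    exact ⟨istar, lt_of_le_of_ne hle hstar_ne, hyp⟩

end Aux

/-- Every basic tree-decomposition of a graph is refined: it is normal and admits no
proper refinement. -/
theorem basic_is_refined {V : Type*} [Fintype V] (G : SimpleGraph V)
    (D : TreeDecomp G) (hD : Basic D) : Refined D := by
  constructor
  · intro x0 y0 hadj hsub
    obtain ⟨E, _, hnlt, _⟩ := contract_exists D hadj hsub
    exact hD E hnlt
  · rintro ⟨D', href, hnotref⟩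
    obtain ⟨F, hFn, hFr⟩ := exists_normal_refines (Nat.card D'.ι) D' le_rfl
    have hFD : Refines F D := refines_trans hFr href
    rcases nlt_or_refines hFn hFD with h | h
    · exact hD F h
    · exact hnotref (refines_trans h hFr)
end

section
/- Let (B_x : x ∈ V(T)) be a refined tree-decomposition of a graph G. Then for all nodes x, y ∈ V(T) (not necessarily distinct) and any subset S ⊆ B_y, the bag B_x intersects exactly one connected component of G − S, unless x = y and S = B_y. -/
open SimpleGraph

namespace TDAux


variable {α : Type*}

/-- Two copies of `T` joined by an edge between the two copies of `y`. -/
def glue (T : SimpleGraph α) (y : α) : SimpleGraph (α ⊕ α) where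
  Adj u v := match u, v with
    | .inl a, .inl b => T.Adj a b
    | .inr a, .inr b => T.Adj a b
    | .inl a, .inr b => a = y ∧ b = y
    | .inr a, .inl b => a = y ∧ b = y
  symm := by
    constructor
    rintro (a | a) (b | b) h
    · exact h.symm
    · exact ⟨h.2, h.1⟩
    · exact ⟨h.2, h.1⟩
    · exact h.symm
  loopless := by
    constructor
    rintro (a | a) h
    · exact T.loopless.irrefl a h
    · exact T.loopless.irrefl a h

variable {T : SimpleGraph α} {y : α}

@[simp] lemma glue_inl_inl {a b : α} : (glue T y).Adj (.inl a) (.inl b) ↔ T.Adj a b := Iff.rfl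
@[simp] lemma glue_inr_inr {a b : α} : (glue T y).Adj (.inr a) (.inr b) ↔ T.Adj a b := Iff.rfl
@[simp] lemma glue_inl_inr {a b : α} : (glue T y).Adj (.inl a) (.inr b) ↔ a = y ∧ b = y := Iff.rfl
@[simp] lemma glue_inr_inl {a b : α} : (glue T y).Adj (.inr a) (.inl b) ↔ a = y ∧ b = y := Iff.rfl

/-- Collapse the two copies. -/
def fold : α ⊕ α → α := Sum.elim id id

@[simp] lemma fold_inl (a : α) : fold (.inl a : α ⊕ α) = a := rfl
@[simp] lemma fold_inr (a : α) : fold (.inr a : α ⊕ α) = a := rfl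

lemma fold_inj {z z' : α ⊕ α} (h : z.isLeft = z'.isLeft) (hf : fold z = fold z') : z = z' := by
  rcases z with a | a <;> rcases z' with b | b <;> simp_all [fold]

lemma adj_side {s t : α ⊕ α} (h : (glue T y).Adj s t)
    (hne : s(s, t) ≠ s(Sum.inl y, Sum.inr y)) :
    s.isLeft = t.isLeft ∧ T.Adj (fold s) (fold t) := by
  rcases s with a | a <;> rcases t with b | b
  · exact ⟨rfl, h⟩
  · obtain ⟨rfl, rfl⟩ := h; exact absurd rfl hne
  · obtain ⟨rfl, rfl⟩ := h; exact absurd Sym2.eq_swap hne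
  · exact ⟨rfl, h⟩

/-- Project a walk in `glue T y` avoiding the bridge edge down to a walk in `T`. -/
def proj : ∀ {s t : α ⊕ α} (w : (glue T y).Walk s t),
    s(Sum.inl y, Sum.inr y) ∉ w.edges → T.Walk (fold s) (fold t)
  | _, _, .nil, _ => .nil
  | _, _, .cons h p, he =>
      .cons ((adj_side h (fun hc => he (by rw [← hc]; simp))).2)
        (proj p (fun hp => he (by simp [hp])))

lemma proj_support {s t : α ⊕ α} (w : (glue T y).Walk s t) :
    ∀ he, (proj w he).support = w.support.map fold := by
  induction w with
  | nil => intro he; simp [proj]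
  | cons h p ih => intro he; simp [proj, ih]

lemma proj_edges {s t : α ⊕ α} (w : (glue T y).Walk s t) :
    ∀ he, (proj w he).edges = w.edges.map (Sym2.map fold) := by
  induction w with
  | nil => intro he; simp [proj]
  | cons h p ih => intro he; simp [proj, ih]

lemma proj_length {s t : α ⊕ α} (w : (glue T y).Walk s t) :
    ∀ he, (proj w he).length = w.length := by
  induction w with
  | nil => intro he; simp [proj]
  | cons h p ih => intro he; simp [proj, ih]

lemma side_const {s t : α ⊕ α} (w : (glue T y).Walk s t) :
    ∀ (_ : s(Sum.inl y, Sum.inr y) ∉ w.edges), ∀ z ∈ w.support, z.isLeft = s.isLeft := by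
  induction w with
  | nil =>
    intro he z hz
    simp only [Walk.support_nil, List.mem_singleton] at hz
    subst hz; rfl
  | @cons u m t h p ih =>
    intro he z hz
    have hcne : s(u, m) ≠ s(Sum.inl y, Sum.inr y) := fun hc => he (by rw [← hc]; simp)
    have hside := (adj_side h hcne).1
    rw [Walk.support_cons, List.mem_cons] at hz
    rcases hz with rfl | hz
    · rfl
    · exact (ih (fun hp => he (by simp [hp])) z hz).trans hside.symm

lemma trail_parity {s t : α ⊕ α} (w : (glue T y).Walk s t) (hw : w.IsTrail) :
    (s(Sum.inl y, Sum.inr y) ∈ w.edges) ↔ s.isLeft ≠ t.isLeft := by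
  induction w with
  | nil => simp
  | @cons u m t h p ih =>
    rw [Walk.isTrail_cons] at hw
    by_cases hc : s(u, m) = s(Sum.inl y, Sum.inr y)
    · have hsides : u.isLeft ≠ m.isLeft := by
        rcases Sym2.eq_iff.mp hc with ⟨rfl, rfl⟩ | ⟨rfl, rfl⟩ <;> simp
      have hpe : s(Sum.inl y, Sum.inr y) ∉ p.edges := hc ▸ hw.2
      have hmt : m.isLeft = t.isLeft := by
        by_contra hmt
        exact hpe ((ih hw.1).mpr hmt)
      simp only [Walk.edges_cons, List.mem_cons]
      constructor
      · intro _
        rw [← hmt]; exact hsides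
      · intro _
        exact Or.inl hc.symm
    · have hside := (adj_side h (by exact hc)).1
      simp only [Walk.edges_cons, List.mem_cons]
      rw [ih hw.1, hside]
      constructor
      · rintro (hceq | h2)
        · exact absurd hceq.symm hc
        · exact h2
      · intro h2; exact Or.inr h2

lemma glue_isAcyclic (hT : T.IsAcyclic) : (glue T y).IsAcyclic := by
  intro u c hc
  have he0 : s(Sum.inl y, Sum.inr y) ∉ c.edges := by
    rw [trail_parity c hc.isTrail]
    simp
  have hsides := side_const c he0
  refine hT (proj c he0) ⟨⟨⟨?_⟩, ?_⟩, ?_⟩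
  · -- edges nodup
    rw [proj_edges c he0]
    refine List.Nodup.map_on ?_ hc.edges_nodup
    intro e he e' he' hee
    induction e using Sym2.ind with | _ a b =>
    induction e' using Sym2.ind with | _ a' b' =>
    have ha := hsides a (Walk.fst_mem_support_of_mem_edges c he)
    have hb := hsides b (Walk.snd_mem_support_of_mem_edges c he)
    have ha' := hsides a' (Walk.fst_mem_support_of_mem_edges c he')
    have hb' := hsides b' (Walk.snd_mem_support_of_mem_edges c he')
    simp only [Sym2.map_pair_eq] at hee
    rcases Sym2.eq_iff.mp hee with ⟨h1, h2⟩ | ⟨h1, h2⟩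
    · rw [fold_inj (ha.trans ha'.symm) h1, fold_inj (hb.trans hb'.symm) h2]
    · rw [fold_inj (ha.trans hb'.symm) h1, fold_inj (hb.trans ha'.symm) h2]
      exact Sym2.eq_swap
  · -- ne nil
    intro hnil
    have hlen := proj_length c he0
    rw [hnil] at hlen
    simp only [Walk.length_nil] at hlen
    exact hc.ne_nil (Walk.length_eq_zero_iff.mp hlen.symm).eq_nil
  · -- support tail nodup
    rw [proj_support c he0]
    rw [← List.map_tail]
    refine List.Nodup.map_on ?_ hc.support_nodup
    intro z hz z' hz' hzz
    exact fold_inj (((hsides z (List.tail_subset _ hz)).trans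
      (hsides z' (List.tail_subset _ hz')).symm)) hzz

lemma glue_connected (hT : T.Connected) : (glue T y).Connected := by
  have hn : Nonempty α := hT.nonempty
  have hl : ∀ a : α, (glue T y).Reachable (.inl a) (.inl y) := fun a =>
    (hT a y).map ⟨Sum.inl, fun h => h⟩
  have hr : ∀ a : α, (glue T y).Reachable (.inr a) (.inr y) := fun a =>
    (hT a y).map ⟨Sum.inr, fun h => h⟩
  have hbr : (glue T y).Reachable (.inl y) (.inr y) := (Adj.reachable (by simp))
  constructor
  · rintro (a | a) (b | b)
    · exact (hl a).trans (hl b).symm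
    · exact ((hl a).trans hbr).trans (hr b).symm
    · exact ((hr a).trans hbr.symm).trans (hl b).symm
    · exact (hr a).trans (hr b).symm

lemma glue_isTree (hT : T.IsTree) : (glue T y).IsTree :=
  ⟨glue_connected hT.isConnected, glue_isAcyclic hT.IsAcyclic⟩



/-- The subtree property: if `v` lies in the bags of both endpoints of a path, it lies in
every bag along the path. -/
lemma mem_bag_of_mem_path {V : Type*} {G : SimpleGraph V} (D : TreeDecomp G) {v : V}
    {a b z : D.ι} (ha : v ∈ D.bag a) (hb : v ∈ D.bag b) {p : D.tree.Walk a b}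
    (hp : p.IsPath) (hz : z ∈ p.support) : v ∈ D.bag z := by
  classical
  obtain ⟨w⟩ := (D.support_conn v) ⟨a, ha⟩ ⟨b, hb⟩
  let f : (D.tree.induce {x : D.ι | v ∈ D.bag x}) →g D.tree := ⟨Subtype.val, fun h => h⟩
  let w' : D.tree.Walk a b := w.map f
  have hsup : ∀ u ∈ w'.support, v ∈ D.bag u := by
    intro u hu
    rw [Walk.support_map] at hu
    obtain ⟨⟨u', hu'⟩, _, rfl⟩ := List.mem_map.mp hu
    exact hu'
  have huniq : w'.toPath = (⟨p, hp⟩ : D.tree.Path a b) :=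
    D.isTree.IsAcyclic.path_unique _ _
  have hzsup : z ∈ (w'.toPath : D.tree.Walk a b).support := by rw [huniq]; exact hz
  exact hsup z (Walk.support_toPath_subset w' hzsup)

/-- In a normal tree-decomposition, no bag is contained in a different bag. -/
lemma not_bag_subset {V : Type*} {G : SimpleGraph V} (D : TreeDecomp G) (hN : D.Normal)
    {a b : D.ι} (hab : a ≠ b) : ¬ D.bag a ⊆ D.bag b := by
  intro hsub
  obtain ⟨p, hp, -⟩ := D.isTree.existsUnique_path a b
  cases p with
  | nil => exact hab rfl
  | @cons _ c _ h q =>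
    refine hN h (fun v hv => ?_)
    exact mem_bag_of_mem_path D hv (hsub hv) hp
      (by rw [Walk.support_cons]; exact List.mem_cons_of_mem _ q.start_mem_support)

end TDAux

/-- In a refined tree-decomposition, for all nodes `x, y` and any `S ⊆ B_y`, the bag
`B_x` intersects exactly one connected component of `G − S`, unless `x = y` and
`S = B_y`. -/
theorem refined_bag_meets_unique_component {V : Type*} (G : SimpleGraph V)
    (D : TreeDecomp G) (hD : Refined D) (x y : D.ι) (S : Finset V)
    (hS : S ⊆ D.bag y) (hne : ¬ (x = y ∧ S = D.bag y)) :
    ∃! C : (G.induce {v : V | v ∉ S}).ConnectedComponent,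
      ∃ (v : V) (hv : v ∉ S), v ∈ D.bag x ∧
        (G.induce {v : V | v ∉ S}).connectedComponentMk ⟨v, hv⟩ = C := by
  classical
  obtain ⟨hN, hNR⟩ := hD
  -- Existence: the bag of `x` has a vertex outside `S`.
  have hex : ∃ v, v ∈ D.bag x ∧ v ∉ S := by
    by_contra hcon
    push_neg at hcon
    have hsub : D.bag x ⊆ S := fun v hv => hcon v hv
    rcases eq_or_ne x y with rfl | hxy
    · exact hne ⟨rfl, Finset.Subset.antisymm hS hsub⟩
    · exact TDAux.not_bag_subset D hN hxy (hsub.trans hS)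
  obtain ⟨v0, hv0B, hv0S⟩ := hex
  set H := G.induce {v : V | v ∉ S} with hHdef
  refine ⟨H.connectedComponentMk ⟨v0, hv0S⟩, ⟨v0, hv0S, hv0B, rfl⟩, ?_⟩
  rintro C ⟨v2, hv2S, hv2B, rfl⟩
  by_contra hCC
  -- `C1` is the vertex set of the component of `v0` in `G - S`.
  set C1 : Set V := {w | ∃ hw : w ∉ S,
    H.connectedComponentMk ⟨w, hw⟩ = H.connectedComponentMk ⟨v0, hv0S⟩} with hC1def
  have hv0C1 : v0 ∈ C1 := ⟨hv0S, rfl⟩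
  have hv2C1 : v2 ∉ C1 := by
    rintro ⟨hw, hcomp⟩
    exact hCC hcomp
  have hC1S : ∀ w ∈ C1, w ∉ S := by rintro w ⟨h, -⟩; exact h
  have hadjC1 : ∀ v ∈ C1, ∀ w, G.Adj v w → w ∉ S → w ∈ C1 := by
    rintro v ⟨hvS, hvc⟩ w hadj hwS
    refine ⟨hwS, ?_⟩
    have hHadj : H.Adj ⟨w, hwS⟩ ⟨v, hvS⟩ := hadj.symm
    exact (SimpleGraph.ConnectedComponent.connectedComponentMk_eq_of_adj hHadj).trans hvc
  set A : Set V := C1 ∪ ↑S with hAdef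
  set bag' : D.ι ⊕ D.ι → Finset V :=
    Sum.elim (fun z => (D.bag z).filter (· ∈ A)) (fun z => (D.bag z).filter (· ∉ C1))
    with hbag'def
  have hmemL : ∀ (z : D.ι) (v : V), v ∈ bag' (Sum.inl z) ↔ v ∈ D.bag z ∧ v ∈ A := by
    intro z v; simp [hbag'def]
  have hmemR : ∀ (z : D.ι) (v : V), v ∈ bag' (Sum.inr z) ↔ v ∈ D.bag z ∧ v ∉ C1 := by
    intro z v; simp [hbag'def]
  -- Build the proper refinement.
  refine hNR ⟨⟨D.ι ⊕ D.ι, by letI := D.fint; exact inferInstance,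
    ⟨Sum.inl D.nonempty.some⟩, TDAux.glue D.tree y,
    TDAux.glue_isTree D.isTree, bag', ?_, ?_⟩, ?_, ?_⟩
  · -- edge_mem
    intro v w hvw
    obtain ⟨z, hv, hw⟩ := D.edge_mem hvw
    by_cases hvC : v ∈ C1
    · refine ⟨Sum.inl z, (hmemL z v).mpr ⟨hv, Or.inl hvC⟩, (hmemL z w).mpr ⟨hw, ?_⟩⟩
      by_cases hwS : w ∈ S
      · exact Or.inr hwS
      · exact Or.inl (hadjC1 v hvC w hvw hwS)
    · by_cases hwC : w ∈ C1
      · refine ⟨Sum.inl z, (hmemL z v).mpr ⟨hv, ?_⟩, (hmemL z w).mpr ⟨hw, Or.inl hwC⟩⟩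
        by_cases hvS : v ∈ S
        · exact Or.inr hvS
        · exact absurd (hadjC1 w hwC v hvw.symm hvS) hvC
      · exact ⟨Sum.inr z, (hmemR z v).mpr ⟨hv, hvC⟩, (hmemR z w).mpr ⟨hw, hwC⟩⟩
  · -- support_conn
    intro v
    set U : Set D.ι := {z | v ∈ D.bag z} with hUdef
    have hU := D.support_conn v
    set U' : Set (D.ι ⊕ D.ι) := {p | v ∈ bag' p} with hU'def
    show ((TDAux.glue D.tree y).induce U').Connected
    by_cases hvC : v ∈ C1
    · -- `v` lives only in the left copy
      have hL : ∀ z ∈ U, (Sum.inl z : D.ι ⊕ D.ι) ∈ U' := by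
        intro z hz
        exact (hmemL z v).mpr ⟨hz, Or.inl hvC⟩
      have hnotR : ∀ z : D.ι, (Sum.inr z : D.ι ⊕ D.ι) ∉ U' := by
        intro z hz
        exact ((hmemR z v).mp hz).2 hvC
      let Φ : (D.tree.induce U) →g ((TDAux.glue D.tree y).induce U') :=
        ⟨fun r => ⟨Sum.inl r.1, hL r.1 r.2⟩, fun {a b} hab => hab⟩
      obtain ⟨⟨z0, hz0⟩⟩ := hU.nonempty
      haveI : Nonempty U' := ⟨⟨Sum.inl z0, hL z0 hz0⟩⟩
      constructor
      rintro ⟨(z | z), hp⟩ ⟨(z' | z'), hq⟩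
      · exact (hU ⟨z, ((hmemL z v).mp hp).1⟩ ⟨z', ((hmemL z' v).mp hq).1⟩).map Φ
      · exact absurd hq (hnotR z')
      · exact absurd hp (hnotR z)
      · exact absurd hp (hnotR z)
    · by_cases hvS : v ∈ S
      · -- `v ∈ S`: both copies, joined through the two copies of `y`
        have hvA : v ∈ A := Or.inr hvS
        have hyU : y ∈ U := hS hvS
        have hL : ∀ z ∈ U, (Sum.inl z : D.ι ⊕ D.ι) ∈ U' := fun z hz =>
          (hmemL z v).mpr ⟨hz, hvA⟩
        have hR : ∀ z ∈ U, (Sum.inr z : D.ι ⊕ D.ι) ∈ U' := fun z hz =>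
          (hmemR z v).mpr ⟨hz, hvC⟩
        let Φ : (D.tree.induce U) →g ((TDAux.glue D.tree y).induce U') :=
          ⟨fun r => ⟨Sum.inl r.1, hL r.1 r.2⟩, fun {a b} hab => hab⟩
        let Ψ : (D.tree.induce U) →g ((TDAux.glue D.tree y).induce U') :=
          ⟨fun r => ⟨Sum.inr r.1, hR r.1 r.2⟩, fun {a b} hab => hab⟩
        have hbridge : ((TDAux.glue D.tree y).induce U').Reachable
            ⟨Sum.inl y, hL y hyU⟩ ⟨Sum.inr y, hR y hyU⟩ :=
          SimpleGraph.Adj.reachable (by exact ⟨rfl, rfl⟩)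
        have hreach : ∀ (p : D.ι ⊕ D.ι) (hp : p ∈ U'),
            ((TDAux.glue D.tree y).induce U').Reachable ⟨p, hp⟩ ⟨Sum.inl y, hL y hyU⟩ := by
          rintro (z | z) hp
          · exact (hU ⟨z, ((hmemL z v).mp hp).1⟩ ⟨y, hyU⟩).map Φ
          · exact ((hU ⟨z, ((hmemR z v).mp hp).1⟩ ⟨y, hyU⟩).map Ψ).trans hbridge.symm
        haveI : Nonempty U' := ⟨⟨Sum.inl y, hL y hyU⟩⟩
        constructor
        rintro ⟨p, hp⟩ ⟨q, hq⟩
        exact (hreach p hp).trans (hreach q hq).symm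
      · -- `v` lives only in the right copy
        have hvA : v ∉ A := by
          rintro (h | h)
          · exact hvC h
          · exact hvS h
        have hR : ∀ z ∈ U, (Sum.inr z : D.ι ⊕ D.ι) ∈ U' := fun z hz =>
          (hmemR z v).mpr ⟨hz, hvC⟩
        have hnotL : ∀ z : D.ι, (Sum.inl z : D.ι ⊕ D.ι) ∉ U' := by
          intro z hz
          exact hvA ((hmemL z v).mp hz).2
        let Ψ : (D.tree.induce U) →g ((TDAux.glue D.tree y).induce U') :=
          ⟨fun r => ⟨Sum.inr r.1, hR r.1 r.2⟩, fun {a b} hab => hab⟩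
        obtain ⟨⟨z0, hz0⟩⟩ := hU.nonempty
        haveI : Nonempty U' := ⟨⟨Sum.inr z0, hR z0 hz0⟩⟩
        constructor
        rintro ⟨(z | z), hp⟩ ⟨(z' | z'), hq⟩
        · exact absurd hp (hnotL z)
        · exact absurd hp (hnotL z)
        · exact absurd hq (hnotL z')
        · exact (hU ⟨z, ((hmemR z v).mp hp).1⟩ ⟨z', ((hmemR z' v).mp hq).1⟩).map Ψ
  · -- Refines D' D
    rintro (z | z)
    · exact ⟨z, Finset.filter_subset _ _⟩
    · exact ⟨z, Finset.filter_subset _ _⟩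
  · -- ¬ Refines D D'
    intro hcon
    obtain ⟨p, hsub⟩ := hcon x
    rcases p with z | z
    · rcases ((hmemL z v2).mp (hsub hv2B)).2 with h | h
      · exact hv2C1 h
      · exact hv2S h
    · exact ((hmemR z v0).mp (hsub hv0B)).2 hv0C1
end

section
/- Every bag of every refined tree-decomposition of a graph G is unbreakable: for every node x of the decomposition tree, there is no separation (A, B) of G with A∩B ⊆ B_x such that B_x \ A and B_x \ B are both nonempty. -/
open SimpleGraph

/-- A separation of `G`: vertex sets covering `V(G)` with every edge inside one side. -/
def IsSeparation {V : Type*} (G : SimpleGraph V) (A B : Set V) : Prop :=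
  A ∪ B = Set.univ ∧ ∀ ⦃v w : V⦄, G.Adj v w → (v ∈ A ∧ w ∈ A) ∨ (v ∈ B ∧ w ∈ B)

/-- The separation `(A, B)` breaks the set `S`. -/
def Breaks {V : Type*} (G : SimpleGraph V) (A B S : Set V) : Prop :=
  IsSeparation G A B ∧ (S \ A).Nonempty ∧ (S \ B).Nonempty ∧ A ∩ B ⊆ S

def Breakable {V : Type*} (G : SimpleGraph V) (S : Set V) : Prop :=
  ∃ A B : Set V, Breaks G A B S

def Unbreakable {V : Type*} (G : SimpleGraph V) (S : Set V) : Prop :=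
  ¬ Breakable G S

section GlueAux
lemma reachable_invariant {H : SimpleGraph ι} {P : ι → Prop}
    (hP : ∀ ⦃a b⦄, H.Adj a b → (P a ↔ P b)) {u w : ι} (h : H.Reachable u w) :
    P u ↔ P w := by
  obtain ⟨p⟩ := h
  induction p with
  | nil => rfl
  | cons h p ih => exact (hP h).trans ih

/-- Two copies of `T` glued by an edge between the two copies of `x`. -/
def glue (T : SimpleGraph ι) (x : ι) : SimpleGraph (ι × Bool) where
  Adj a b := (a.2 = b.2 ∧ T.Adj a.1 b.1) ∨ (a.1 = x ∧ b.1 = x ∧ a.2 ≠ b.2)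
  symm := by
    constructor
    rintro a b (⟨h1, h2⟩ | ⟨h1, h2, h3⟩)
    · exact Or.inl ⟨h1.symm, h2.symm⟩
    · exact Or.inr ⟨h2, h1, h3.symm⟩
  loopless := by
    constructor
    rintro a (⟨_, h⟩ | ⟨_, _, h⟩)
    · exact T.loopless.irrefl _ h
    · exact h rfl

lemma glue_adj {T : SimpleGraph ι} {x : ι} {a b : ι × Bool} :
    (glue T x).Adj a b ↔ (a.2 = b.2 ∧ T.Adj a.1 b.1) ∨ (a.1 = x ∧ b.1 = x ∧ a.2 ≠ b.2) :=
  Iff.rfl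

/-- Inclusion of a copy. -/
def glueHom (T : SimpleGraph ι) (x : ι) (s : Bool) : T →g glue T x :=
  ⟨fun t => (t, s), fun h => Or.inl ⟨rfl, h⟩⟩

lemma glue_connected {T : SimpleGraph ι} (hT : T.Connected) (x : ι) :
    (glue T x).Connected := by
  have hne : Nonempty (ι × Bool) := ⟨(x, false)⟩
  rw [connected_iff]
  refine ⟨fun a b => ?_, hne⟩
  have key : ∀ a : ι × Bool, (glue T x).Reachable a (x, a.2) := by
    rintro ⟨t, s⟩
    exact (hT.preconnected t x).map (glueHom T x s)
  refine (key a).trans (Reachable.trans ?_ (key b).symm)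
  rcases eq_or_ne a.2 b.2 with h | h
  · rw [h]
  · exact Adj.reachable (Or.inr ⟨rfl, rfl, h⟩)

private lemma bool_fact : ∀ a b c d : Bool, a ≠ b → c ≠ d →
    (c = a ∧ d = b) ∨ (c = b ∧ d = a) := by decide

lemma glue_isAcyclic {T : SimpleGraph ι} (hT : T.IsAcyclic) (x : ι) :
    (glue T x).IsAcyclic := by
  rw [isAcyclic_iff_forall_adj_isBridge]
  rintro ⟨a1, a2⟩ ⟨b1, b2⟩ hab
  rw [isBridge_iff]
  rcases hab with ⟨hs, hadj⟩ | ⟨hx1, hx2, hne⟩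
  · -- copy edge
    dsimp at hs hadj; subst hs
    set Q : ι → Prop := fun u => (T \ fromEdgeSet {s(a1, b1)}).Reachable a1 u with hQ
    have hbr : ¬ Q b1 := by
      have := (isAcyclic_iff_forall_adj_isBridge.mp hT) hadj
      rw [isBridge_iff] at this; exact this
    intro hreach
    set P : ι × Bool → Prop := fun c => Q (if c.2 = a2 then c.1 else x) with hP
    have hinv : ∀ ⦃c d : ι × Bool⦄,
        ((glue T x) \ fromEdgeSet {s((a1, a2), (b1, a2))}).Adj c d → (P c ↔ P d) := by
      rintro ⟨c1, c2⟩ ⟨d1, d2⟩ hcd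
      rw [sdiff_adj] at hcd
      obtain ⟨h1, h2⟩ := hcd
      rcases h1 with ⟨hs2, hadj2⟩ | ⟨hc1, hd1, hne2⟩
      · dsimp at hs2 hadj2; subst hs2
        by_cases hc2 : c2 = a2
        · subst hc2
          have hne3 : s(c1, d1) ≠ s(a1, b1) := by
            intro he
            apply h2
            rw [fromEdgeSet_adj]
            rw [Sym2.eq_iff] at he
            constructor
            · rw [Set.mem_singleton_iff, Sym2.eq_iff]
              rcases he with ⟨rfl, rfl⟩ | ⟨rfl, rfl⟩
              · exact Or.inl ⟨rfl, rfl⟩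
              · exact Or.inr ⟨rfl, rfl⟩
            · intro h
              simp only [Prod.mk.injEq] at h
              obtain ⟨rfl, -⟩ := h
              exact T.loopless.irrefl _ hadj2
          have hstep : (T \ fromEdgeSet {s(a1, b1)}).Adj c1 d1 := by
            rw [sdiff_adj, fromEdgeSet_adj]
            exact ⟨hadj2, fun h => hne3 h.1⟩
          simp only [hP, if_pos rfl]
          exact ⟨fun h => h.trans hstep.reachable, fun h => h.trans hstep.symm.reachable⟩
        · simp only [hP]
          rw [if_neg hc2, if_neg hc2]
      · dsimp at hc1 hd1 hne2; subst hc1; subst hd1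
        simp only [hP]
        by_cases h3 : c2 = a2 <;> by_cases h4 : d2 = a2 <;>
          simp [h3, h4]
    have hPab := reachable_invariant hinv hreach
    apply hbr
    have hPa : P (a1, a2) := by simp only [hP, if_pos rfl]; exact Reachable.refl _
    have := hPab.mp hPa
    simpa only [hP, if_pos rfl, ↓reduceIte] using this
  · -- cross edge
    dsimp at hx1 hx2 hne
    rw [hx1, hx2]
    intro hreach
    set P : ι × Bool → Prop := fun c => c.2 = a2 with hP
    have hinv : ∀ ⦃c d : ι × Bool⦄,
        ((glue T x) \ fromEdgeSet {s((x, a2), (x, b2))}).Adj c d → (P c ↔ P d) := by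
      rintro ⟨c1, c2⟩ ⟨d1, d2⟩ hcd
      rw [sdiff_adj] at hcd
      obtain ⟨h1, h2⟩ := hcd
      rcases h1 with ⟨hs2, _⟩ | ⟨hc1, hd1, hne2⟩
      · dsimp at hs2; subst hs2; rfl
      · exfalso
        dsimp at hc1 hd1 hne2; subst hc1; subst hd1
        apply h2
        rw [fromEdgeSet_adj]
        refine ⟨?_, by simpa using hne2⟩
        rcases bool_fact a2 b2 c2 d2 hne hne2 with ⟨rfl, rfl⟩ | ⟨rfl, rfl⟩
        · simp
        · rw [Sym2.eq_swap]; simp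
    have hPab := reachable_invariant hinv hreach
    have h1 : P (x, a2) := rfl
    have h2 : P (x, b2) := hPab.mp h1
    exact hne h2.symm

/-- Mapping reachability in an induced subtree into a copy inside the glue. -/
lemma glue_induce_reach {ι : Type*} {T : SimpleGraph ι} {x : ι} {S : Set ι}
    {S' : Set (ι × Bool)} (s : Bool) (hsub : ∀ t ∈ S, ((t, s) : ι × Bool) ∈ S')
    (hconn : (T.induce S).Connected) {t u : ι} (ht : t ∈ S) (hu : u ∈ S) :
    ((glue T x).induce S').Reachable ⟨(t, s), hsub t ht⟩ ⟨(u, s), hsub u hu⟩ := by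
  have h : (T.induce S).Reachable ⟨t, ht⟩ ⟨u, hu⟩ := hconn.preconnected _ _
  let f : T.induce S →g (glue T x).induce S' :=
    ⟨fun q => ⟨(q.1, s), hsub q.1 q.2⟩, fun {a b} hadj => Or.inl ⟨rfl, hadj⟩⟩
  exact h.map f

end GlueAux

/-- Every bag of every refined tree-decomposition of a graph `G` is unbreakable. -/
theorem refined_bag_unbreakable {V : Type*} (G : SimpleGraph V)
    (D : TreeDecomp G) (hD : Refined D) (x : D.ι) :
    Unbreakable G (↑(D.bag x) : Set V) := by
  classical
  unfold Unbreakable Breakable Breaks IsSeparation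
  rintro ⟨A, B, ⟨hcov, hsep⟩, hA, hB, hAB⟩
  obtain ⟨hNorm, hNoRef⟩ := hD
  apply hNoRef
  have fι := D.fint
  set bag' : D.ι × Bool → Finset V :=
    fun p => (D.bag p.1).filter (fun v => if p.2 then v ∈ B else v ∈ A) with hbag'
  have hmem : ∀ (v : V) (p : D.ι × Bool),
      v ∈ bag' p ↔ v ∈ D.bag p.1 ∧ (if p.2 then v ∈ B else v ∈ A) := by
    intro v p; simp [hbag', Finset.mem_filter]
  refine ⟨⟨D.ι × Bool, inferInstance, ⟨(x, false)⟩, glue D.tree x,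
    ⟨glue_connected D.isTree.1 x, glue_isAcyclic D.isTree.2 x⟩, bag', ?_, ?_⟩, ?_, ?_⟩
  · -- edge_mem
    intro v w hvw
    obtain ⟨t, hv, hw⟩ := D.edge_mem hvw
    rcases hsep hvw with ⟨h1, h2⟩ | ⟨h1, h2⟩
    · exact ⟨(t, false), (hmem v _).mpr ⟨hv, by simpa using h1⟩,
        (hmem w _).mpr ⟨hw, by simpa using h2⟩⟩
    · exact ⟨(t, true), (hmem v _).mpr ⟨hv, by simpa using h1⟩,
        (hmem w _).mpr ⟨hw, by simpa using h2⟩⟩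
  · -- support_conn
    intro v
    have hS := D.support_conn v
    set S : Set D.ι := {t | v ∈ D.bag t} with hSdef
    obtain ⟨⟨t₀, ht₀⟩⟩ := hS.nonempty
    have hvAB : v ∈ A ∨ v ∈ B := by
      have : v ∈ A ∪ B := by rw [hcov]; trivial
      exact this
    set S' : Set (D.ι × Bool) := {q : D.ι × Bool | v ∈ bag' q} with hS'def
    by_cases hvA : v ∈ A <;> by_cases hvB : v ∈ B
    · -- v ∈ A ∩ B : S' = S × Bool, and x ∈ S
      have hxS : x ∈ S := hAB ⟨hvA, hvB⟩
      have hsub : ∀ (s : Bool), ∀ t ∈ S, ((t, s) : D.ι × Bool) ∈ S' := by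
        intro s t ht
        rw [hS'def, Set.mem_setOf_eq, hmem]
        exact ⟨ht, by cases s <;> simp [hvA, hvB]⟩
      rw [connected_iff]
      refine ⟨?_, ⟨⟨(t₀, false), hsub false t₀ ht₀⟩⟩⟩
      rintro ⟨⟨t, s⟩, hts⟩ ⟨⟨u, s'⟩, hus⟩
      have htS : t ∈ S := ((hmem v _).mp hts).1
      have huS : u ∈ S := ((hmem v _).mp hus).1
      have r1 : ((glue D.tree x).induce S').Reachable ⟨(t, s), hts⟩ ⟨(x, s), hsub s x hxS⟩ := by
        have := glue_induce_reach (x := x) s (hsub s) hS htS hxS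
        convert this using 2
      have r2 : ((glue D.tree x).induce S').Reachable ⟨(x, s'), hsub s' x hxS⟩ ⟨(u, s'), hus⟩ := by
        have := glue_induce_reach (x := x) s' (hsub s') hS hxS huS
        convert this using 2
      refine r1.trans (Reachable.trans ?_ r2)
      rcases eq_or_ne s s' with rfl | hss
      · exact Reachable.refl _
      · exact Adj.reachable (Or.inr ⟨rfl, rfl, hss⟩)
    · -- v ∈ A \ B : S' = S × {false}
      have hsub : ∀ t ∈ S, ((t, false) : D.ι × Bool) ∈ S' := by
        intro t ht
        rw [hS'def, Set.mem_setOf_eq, hmem]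
        exact ⟨ht, by simp [hvA]⟩
      rw [connected_iff]
      refine ⟨?_, ⟨⟨(t₀, false), hsub t₀ ht₀⟩⟩⟩
      rintro ⟨⟨t, s⟩, hts⟩ ⟨⟨u, s'⟩, hus⟩
      obtain ⟨htS, hts2⟩ := (hmem v _).mp hts
      obtain ⟨huS, hus2⟩ := (hmem v _).mp hus
      cases s
      · cases s'
        · have := glue_induce_reach (x := x) false hsub hS htS huS
          convert this using 2
        · simp at hus2; exact absurd hus2 hvB
      · simp at hts2; exact absurd hts2 hvB
    · -- v ∈ B \ A : S' = S × {true}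
      have hsub : ∀ t ∈ S, ((t, true) : D.ι × Bool) ∈ S' := by
        intro t ht
        rw [hS'def, Set.mem_setOf_eq, hmem]
        exact ⟨ht, by simp [hvB]⟩
      rw [connected_iff]
      refine ⟨?_, ⟨⟨(t₀, true), hsub t₀ ht₀⟩⟩⟩
      rintro ⟨⟨t, s⟩, hts⟩ ⟨⟨u, s'⟩, hus⟩
      obtain ⟨htS, hts2⟩ := (hmem v _).mp hts
      obtain ⟨huS, hus2⟩ := (hmem v _).mp hus
      cases s
      · simp at hts2; exact absurd hts2 hvA
      · cases s'
        · simp at hus2; exact absurd hus2 hvA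
        · have := glue_induce_reach (x := x) true hsub hS htS huS
          convert this using 2
    · exact absurd hvAB (by simp [hvA, hvB])
  · -- Refines D' D
    intro p
    exact ⟨p.1, Finset.filter_subset _ _⟩
  · -- ¬ Refines D D'
    intro h
    obtain ⟨⟨t, s⟩, hp⟩ := h x
    cases s
    · obtain ⟨v, hvS, hvnA⟩ := hA
      have hv : v ∈ D.bag x := hvS
      have := (hmem v _).mp (hp hv)
      simp at this
      exact hvnA this.2
    · obtain ⟨v, hvS, hvnB⟩ := hB
      have hv : v ∈ D.bag x := hvS
      have := (hmem v _).mp (hp hv)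
      simp at this
      exact hvnB this.2
end

section
/- Every graph G with maximum degree at most Δ has an optimal tree-decomposition (one of width tw(G)) such that for every bag B, either the induced subgraph G[B] has maximum degree at most Δ − 1, or |B| ≤ Δ + 1. -/
open SimpleGraph

section ExtendTree

variable {ι : Type} (t : SimpleGraph ι) (x0 : ι)

/-- Add a pendant vertex `none` attached to `x0`. -/
def extendTree : SimpleGraph (Option ι) where
  Adj p q := match p, q with
    | some a, some b => t.Adj a b
    | some a, none => a = x0
    | none, some b => b = x0
    | none, none => False
  symm := ⟨fun p q => by
    cases p <;> cases q <;> intro h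
    · exact h.elim
    · exact h
    · exact h
    · exact t.adj_symm h⟩
  loopless := ⟨fun p => by cases p <;> intro h
                           · exact h.elim
                           · exact t.irrefl h⟩

variable {t x0}

lemma extendTree_adj_some_some {a b : ι} :
    (extendTree t x0).Adj (some a) (some b) ↔ t.Adj a b := Iff.rfl

lemma extendTree_adj_none_some {b : ι} :
    (extendTree t x0).Adj none (some b) ↔ b = x0 := Iff.rfl

/-- lower a walk avoiding `none` to a walk in `t`. -/
lemma extendTree_lower : ∀ {p q : Option ι} (w : (extendTree t x0).Walk p q),
    none ∉ w.support → ∃ (a b : ι) (_ : p = some a) (_ : q = some b) (w' : t.Walk a b),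
      w'.support.map some = w.support ∧ w'.edges.map (Sym2.map some) = w.edges := by
  intro p q w
  induction w with
  | nil =>
    intro h
    simp only [SimpleGraph.Walk.support_nil, List.mem_singleton] at h
    obtain ⟨a, rfl⟩ := Option.ne_none_iff_exists'.mp (Ne.symm h)
    exact ⟨a, a, rfl, rfl, SimpleGraph.Walk.nil, by simp, by simp⟩
  | @cons u v' q' h w ih =>
    intro hn
    simp only [SimpleGraph.Walk.support_cons, List.mem_cons] at hn
    push_neg at hn
    obtain ⟨hn1, hn2⟩ := hn
    obtain ⟨a, b, rfl, rfl, w', hs, he⟩ := ih hn2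
    obtain ⟨c, rfl⟩ := Option.ne_none_iff_exists'.mp (Ne.symm hn1)
    refine ⟨c, b, rfl, rfl, SimpleGraph.Walk.cons (extendTree_adj_some_some.mp h) w', ?_, ?_⟩
    · simp [hs]
    · simp [he]

lemma extendTree_edge_of_walk_from_none :
    ∀ {p q : Option ι} (w : (extendTree t x0).Walk p q), p = none → q ≠ none →
      s(none, some x0) ∈ w.edges := by
  intro p q w
  induction w with
  | nil => rintro rfl h; exact absurd rfl h
  | @cons u v' q' h w ih =>
    rintro rfl hq
    cases v' with
    | none => exact (h : False).elim
    | some b =>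
      have hb : b = x0 := h
      subst hb
      simp [SimpleGraph.Walk.edges_cons]

theorem extendTree_isTree (ht : t.IsTree) : (extendTree t x0).IsTree := by
  classical
  let hom : t →g extendTree t x0 := ⟨some, fun {a b} h => h⟩
  have hsome : ∀ a b : ι, (extendTree t x0).Reachable (some a) (some b) := by
    intro a b
    exact Reachable.map hom (ht.isConnected.preconnected a b)
  have hns : (extendTree t x0).Reachable none (some x0) :=
    Adj.reachable (show x0 = x0 from rfl)
  constructor
  · constructor
    rintro (a | a) (b | b)
    · exact Reachable.refl _
    · exact hns.trans (hsome x0 b)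
    · exact ((hns.trans (hsome x0 a)).symm : _)
    · exact hsome a b
  · intro p c hc
    by_cases hnone : (none : Option ι) ∈ c.support
    · have hc' := hc.rotate hnone
      set c' := c.rotate _ hnone with hc'def
      clear_value c'
      cases c' with
      | nil => exact hc'.ne_nil rfl
      | @cons _ v' _ h w =>
        cases v' with
        | none => exact (h : False).elim
        | some b =>
          have hb : b = x0 := h
          subst hb
          have hmem : s(none, some b) ∈ w.edges := by
            have := extendTree_edge_of_walk_from_none (t := t) (x0 := b) w.reverse rfl
              (Option.some_ne_none b)
            rw [SimpleGraph.Walk.edges_reverse, List.mem_reverse] at this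
            exact this
          have hnd := hc'.edges_nodup
          rw [SimpleGraph.Walk.edges_cons] at hnd
          exact (List.nodup_cons.mp hnd).1 hmem
    · obtain ⟨a, b, hp1, hp2, w', hs, he⟩ := extendTree_lower c hnone
      subst hp1
      have hab : a = b := by injection hp2
      subst hab
      refine ht.IsAcyclic w' ?_
      refine ⟨⟨⟨?_⟩, ?_⟩, ?_⟩
      · exact List.Nodup.of_map _ (by rw [he]; exact hc.edges_nodup)
      · rintro rfl
        have hce : c.edges = [] := by rw [← he]; simp
        cases c with
        | nil => exact hc.ne_nil rfl
        | cons h w => simp at hce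
      · refine List.Nodup.of_map some ?_
        have : (w'.support.tail).map some = c.support.tail := by
          rw [← hs, List.map_tail]
        rw [this]
        exact hc.support_nodup

end ExtendTree

/-- Our measure of a tree decomposition: total excess of bags over size `Δ+1`. -/
noncomputable def tdMeasure {V : Type*} {G : SimpleGraph V} (Δ : ℕ) (D : TreeDecomp G) : ℕ :=
  letI := D.fint
  ∑ x : D.ι, ((D.bag x).card - (Δ + 1))

lemma exists_smaller {V : Type*} [Fintype V] {G : SimpleGraph V} [DecidableRel G.Adj] {Δ : ℕ}
    (hΔ : ∀ v : V, G.degree v ≤ Δ) (D : TreeDecomp G) (hD : D.widthLE (treewidth G))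
    (x0 : D.ι) (v : V) (hv : v ∈ D.bag x0) (hbig : Δ + 2 ≤ (D.bag x0).card)
    (hfull : Δ ≤ ((D.bag x0).filter (fun w => G.Adj v w)).card) :
    ∃ D' : TreeDecomp G, D'.widthLE (treewidth G) ∧ tdMeasure Δ D' < tdMeasure Δ D := by
  classical
  letI := D.fint
  have hsub : (D.bag x0).filter (fun w => G.Adj v w) ⊆ G.neighborFinset v := by
    intro w hw
    rw [mem_neighborFinset]
    exact (Finset.mem_filter.mp hw).2
  have hfle : ((D.bag x0).filter (fun w => G.Adj v w)).card ≤ Δ :=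
    le_trans (Finset.card_le_card hsub) (hΔ v)
  have hEq : (D.bag x0).filter (fun w => G.Adj v w) = G.neighborFinset v :=
    Finset.eq_of_subset_of_card_le hsub (le_trans (hΔ v) hfull)
  set B' : Finset V := insert v ((D.bag x0).filter (fun w => G.Adj v w)) with hB'
  have hB'card : B'.card ≤ Δ + 1 := by
    refine le_trans (Finset.card_insert_le _ _) ?_
    omega
  have htw : Δ + 1 ≤ treewidth G := by
    have := hD x0
    omega
  -- proof obligations for the new decomposition
  have hedge : ∀ ⦃u w : V⦄, G.Adj u w → ∃ p : Option D.ι,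
      u ∈ p.elim B' (fun y => (D.bag y).erase v) ∧
      w ∈ p.elim B' (fun y => (D.bag y).erase v) := by
    intro u w huw
    by_cases hu : u = v
    · subst hu
      refine ⟨none, Finset.mem_insert_self _ _, ?_⟩
      have hwnb : w ∈ G.neighborFinset u := (mem_neighborFinset G u w).mpr huw
      rw [← hEq] at hwnb
      exact Finset.mem_insert_of_mem hwnb
    by_cases hw : w = v
    · subst hw
      refine ⟨none, ?_, Finset.mem_insert_self _ _⟩
      have hunb : u ∈ G.neighborFinset w := (mem_neighborFinset G w u).mpr huw.symm
      rw [← hEq] at hunb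
      exact Finset.mem_insert_of_mem hunb
    · obtain ⟨x, hx1, hx2⟩ := D.edge_mem huw
      exact ⟨some x, Finset.mem_erase.mpr ⟨hu, hx1⟩, Finset.mem_erase.mpr ⟨hw, hx2⟩⟩
  have hconn : ∀ u : V, ((extendTree D.tree x0).induce
      {p : Option D.ι | u ∈ p.elim B' (fun y => (D.bag y).erase v)}).Connected := by
    intro u
    by_cases hu : u = v
    · subst hu
      rw [connected_iff]
      refine ⟨?_, ?_⟩
      · rintro ⟨p, hp⟩ ⟨q, hq⟩
        have hp' : p = none := by
          cases p with
          | none => rfl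
          | some y => exact absurd (Finset.mem_erase.mp hp).1 (not_not_intro rfl)
        have hq' : q = none := by
          cases q with
          | none => rfl
          | some y => exact absurd (Finset.mem_erase.mp hq).1 (not_not_intro rfl)
        subst hp'; subst hq'
        exact Reachable.refl _
      · exact ⟨⟨none, Finset.mem_insert_self _ _⟩⟩
    · have hmemS : ∀ y : D.ι, u ∈ D.bag y →
          (some y : Option D.ι) ∈
            {p : Option D.ι | u ∈ p.elim B' (fun y => (D.bag y).erase v)} := by
        intro y hy
        exact Finset.mem_erase.mpr ⟨hu, hy⟩
      have key : ∀ (p : Option D.ι)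
          (hp : p ∈ {p : Option D.ι | u ∈ p.elim B' (fun y => (D.bag y).erase v)}),
          ∃ (y : D.ι) (hy : u ∈ D.bag y),
            ((extendTree D.tree x0).induce
              {p : Option D.ι | u ∈ p.elim B' (fun y => (D.bag y).erase v)}).Reachable
              ⟨p, hp⟩ ⟨some y, hmemS y hy⟩ := by
        rintro (_ | y) hp
        · have hp' : u ∈ B' := hp
          have hub : u ∈ D.bag x0 := by
            rcases Finset.mem_insert.mp hp' with h | h
            · exact absurd h hu
            · exact (Finset.mem_filter.mp h).1
          refine ⟨x0, hub, ?_⟩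
          exact Adj.reachable
            ((extendTree_adj_none_some (t := D.tree) (x0 := x0)).mpr rfl)
        · have hub : u ∈ D.bag y := (Finset.mem_erase.mp hp).2
          exact ⟨y, hub, Reachable.refl _⟩
      rw [connected_iff]
      refine ⟨?_, ?_⟩
      · rintro ⟨p, hp⟩ ⟨q, hq⟩
        obtain ⟨y, hy, hry⟩ := key p hp
        obtain ⟨z, hz, hrz⟩ := key q hq
        refine hry.trans (Reachable.trans ?_ hrz.symm)
        exact Reachable.map
          (⟨fun w => ⟨some w.1, hmemS w.1 w.2⟩,
              fun {a b} h => h⟩ :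
            (D.tree.induce {x : D.ι | u ∈ D.bag x}) →g
            ((extendTree D.tree x0).induce
              {p : Option D.ι | u ∈ p.elim B' (fun y => (D.bag y).erase v)}))
          ((D.support_conn u).preconnected ⟨y, hy⟩ ⟨z, hz⟩)
      · obtain ⟨⟨y, hy⟩⟩ := (D.support_conn u).nonempty
        exact ⟨⟨some y, hmemS y hy⟩⟩
  refine ⟨⟨Option D.ι, inferInstance, ⟨none⟩, extendTree D.tree x0,
    extendTree_isTree D.isTree,
    fun p => p.elim B' (fun y => (D.bag y).erase v), hedge, hconn⟩, ?_, ?_⟩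
  · -- width
    intro p
    cases p with
    | none => exact le_trans hB'card (by omega)
    | some y => exact le_trans (Finset.card_erase_le) (hD y)
  · -- measure decreases
    show (∑ p : Option D.ι,
        ((p.elim B' (fun y => (D.bag y).erase v)).card - (Δ + 1)))
      < ∑ y : D.ι, ((D.bag y).card - (Δ + 1))
    rw [Fintype.sum_option]
    have h2 : ∑ i : D.ι, (((D.bag i).erase v).card - (Δ + 1))
        < ∑ i : D.ι, ((D.bag i).card - (Δ + 1)) := by
      refine Finset.sum_lt_sum (fun i _ => Nat.sub_le_sub_right Finset.card_erase_le _)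
        ⟨x0, Finset.mem_univ x0, ?_⟩
      have := Finset.card_erase_of_mem hv
      omega
    have h0 : B'.card - (Δ + 1) = 0 := Nat.sub_eq_zero_of_le hB'card
    simp only [Option.elim_none, Option.elim_some]
    omega

/-- Every graph `G` with maximum degree at most `Δ` has an optimal tree-decomposition
(of width `tw(G)`) such that each bag `B` either induces a subgraph of maximum degree
at most `Δ − 1` (the degree of `v` in `G[B]` being the number of neighbours of `v`
inside `B`), or satisfies `|B| ≤ Δ + 1`. -/
theorem optimal_decomp_bag_degree {V : Type*} [Fintype V] (G : SimpleGraph V)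
    [DecidableRel G.Adj] (Δ : ℕ) (hΔ : ∀ v : V, G.degree v ≤ Δ) :
    ∃ D : TreeDecomp G, D.widthLE (treewidth G) ∧
      ∀ x : D.ι,
        (∀ v ∈ D.bag x, ((D.bag x).filter (fun w => G.Adj v w)).card ≤ Δ - 1) ∨
        (D.bag x).card ≤ Δ + 1 := by
  classical
  -- the trivial decomposition, for nonemptiness of the treewidth set
  have hne : ∃ w : ℕ, ∃ D : TreeDecomp G, D.widthLE w := by
    refine ⟨Fintype.card V,
      ⟨Unit, inferInstance, ⟨()⟩, ⊥, ⟨?_, isAcyclic_bot⟩, fun _ => Finset.univ, ?_, ?_⟩, ?_⟩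
    · constructor
      intro a b
      exact Subsingleton.elim a b ▸ Reachable.refl a
    · intro u w h
      exact ⟨(), Finset.mem_univ u, Finset.mem_univ w⟩
    · intro u
      rw [connected_iff]
      refine ⟨?_, ?_⟩
      · rintro ⟨a, ha⟩ ⟨b, hb⟩
        have : (⟨a, ha⟩ : {x : Unit | u ∈ Finset.univ}) = ⟨b, hb⟩ :=
          Subtype.ext (Subsingleton.elim a b)
        rw [this]
      · exact ⟨⟨(), Finset.mem_univ u⟩⟩
    · intro x
      show (Finset.univ : Finset V).card ≤ Fintype.card V + 1
      rw [Finset.card_univ]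
      omega
  have hmem : treewidth G ∈ {w : ℕ | ∃ D : TreeDecomp G, D.widthLE w} := by
    obtain ⟨w, D, h⟩ := hne
    exact Nat.sInf_mem ⟨w, D, h⟩
  obtain ⟨D0, hD0⟩ := hmem
  suffices H : ∀ (n : ℕ) (D : TreeDecomp G), D.widthLE (treewidth G) → tdMeasure Δ D ≤ n →
      ∃ D : TreeDecomp G, D.widthLE (treewidth G) ∧
        ∀ x : D.ι,
          (∀ v ∈ D.bag x, ((D.bag x).filter (fun w => G.Adj v w)).card ≤ Δ - 1) ∨
          (D.bag x).card ≤ Δ + 1 by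
    exact H _ D0 hD0 le_rfl
  intro n
  induction n with
  | zero =>
    intro D hD hm
    by_cases hgood : ∀ x : D.ι,
        (∀ v ∈ D.bag x, ((D.bag x).filter (fun w => G.Adj v w)).card ≤ Δ - 1) ∨
        (D.bag x).card ≤ Δ + 1
    · exact ⟨D, hD, hgood⟩
    · push_neg at hgood
      obtain ⟨x, ⟨v, hv, hfull⟩, hbig⟩ := hgood
      obtain ⟨D', _, hlt⟩ := exists_smaller hΔ D hD x v hv (by omega) (by omega)
      omega
  | succ n ih =>
    intro D hD hm
    by_cases hgood : ∀ x : D.ι,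
        (∀ v ∈ D.bag x, ((D.bag x).filter (fun w => G.Adj v w)).card ≤ Δ - 1) ∨
        (D.bag x).card ≤ Δ + 1
    · exact ⟨D, hD, hgood⟩
    · push_neg at hgood
      obtain ⟨x, ⟨v, hv, hfull⟩, hbig⟩ := hgood
      obtain ⟨D', hD', hlt⟩ := exists_smaller hΔ D hD x v hv (by omega) (by omega)
      exact ih D' hD' (by omega)
end

section
/- Let G be a graph with n vertices and layered treewidth at most c ≥ 1. Then tw(G) ≤ 2√(cn). More precisely, for any positive integer p, there is a set W ⊆ V(G) with |W| ≤ n/p such that G − W has treewidth at most c(p−1) − 1, and hence G has a tree-decomposition of width at most n/p + c(p−1) − 1. -/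
open SimpleGraph

/-- `G` has layered treewidth at most `c`: there is a tree-decomposition and a layering
(encoded by a layer function `ℓ : V → ℕ`, with adjacent vertices in the same or
consecutive layers) such that each bag meets each layer in at most `c` vertices. -/
def ltwLE {V : Type*} (G : SimpleGraph V) (c : ℕ) : Prop :=
  ∃ (D : TreeDecomp G) (ℓ : V → ℕ),
    (∀ ⦃v w : V⦄, G.Adj v w → ℓ v ≤ ℓ w + 1 ∧ ℓ w ≤ ℓ v + 1) ∧
    ∀ (x : D.ι) (i : ℕ), ((D.bag x).filter (fun v => ℓ v = i)).card ≤ c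


open SimpleGraph Walk

private lemma acyclic_of_rank {β : Type*} (G : SimpleGraph β) (ρ : β → ℕ)
    (hne : ∀ ⦃u v⦄, G.Adj u v → ρ u ≠ ρ v)
    (huniq : ∀ ⦃v u1 u2 : β⦄, G.Adj v u1 → G.Adj v u2 → ρ u1 < ρ v → ρ u2 < ρ v → u1 = u2) :
    G.IsAcyclic := by
  classical
  have main : ∀ (u : β) (c : G.Walk u u), c.IsCycle → (∀ x ∈ c.support, ρ x ≤ ρ u) → False := by
    intro u c hc hsupp
    cases c with
    | nil => simp [Walk.isCycle_def, Walk.isCircuit_def] at hc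
    | cons h q =>
      rename_i b
      have hb : ρ b < ρ u :=
        lt_of_le_of_ne (hsupp b (by simp)) (Ne.symm (hne h))
      cases hrev : q.reverse with
      | nil =>
        have : q = Walk.nil.reverse := by rw [← hrev]; simp
        simp at this
        exact h.ne rfl
      | cons h2 q2 =>
        rename_i d
        have hdmem : d ∈ q.support := by
          have : d ∈ q.reverse.support := by rw [hrev]; simp
          rwa [Walk.support_reverse, List.mem_reverse] at this
        have hd : ρ d < ρ u :=
          lt_of_le_of_ne (hsupp d (by simp [hdmem])) (Ne.symm (hne h2))
        have hbd : b = d := huniq h h2 hb hd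
        have hedge : s(u, d) ∈ q.edges := by
          have : s(u, d) ∈ q.reverse.edges := by rw [hrev]; simp
          rwa [Walk.edges_reverse, List.mem_reverse] at this
        have hnodup : (Walk.cons h q).edges.Nodup := hc.edges_nodup
        rw [Walk.edges_cons, List.nodup_cons] at hnodup
        exact hnodup.1 (hbd ▸ hedge)
  intro w c hc
  obtain ⟨u, hu0, hmax⟩ := (c.support.toFinset).exists_max_image ρ
    ⟨w, by simp [c.start_mem_support]⟩
  have hu : u ∈ c.support := by simpa using hu0
  have hc' := hc.rotate hu
  refine main u (c.rotate u hu) hc' ?_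
  intro x hx
  rcases List.mem_cons.1 (by rw [← Walk.support_eq_cons]; exact hx :
      x ∈ u :: (c.rotate u hu).support.tail) with rfl | hx'
  · exact le_refl _
  · have : x ∈ c.support.tail := (Walk.support_rotate c u hu).mem_iff.1 hx'
    exact hmax x (by simp [List.mem_of_mem_tail this])


open SimpleGraph Walk

private lemma tree_rank {α : Type*} {T : SimpleGraph α} (hT : T.IsTree) (x0 : α) :
    ∃ ρ : α → ℕ, ρ x0 = 0 ∧ (∀ ⦃u v⦄, T.Adj u v → ρ u ≠ ρ v) ∧
      (∀ ⦃v u1 u2 : α⦄, T.Adj v u1 → T.Adj v u2 → ρ u1 < ρ v → ρ u2 < ρ v → u1 = u2) := by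
  classical
  choose P hP hPu using (hT.existsUnique_path · x0)
  have key : ∀ ⦃u v : α⦄ (h : T.Adj v u), (P u).length < (P v).length →
      P v = Walk.cons h (P u) := by
    intro u v h hlt
    by_cases hv : v ∈ (P u).support
    · exfalso
      have h1 : (P u).dropUntil v hv = P v := hPu v _ ((hP u).dropUntil hv)
      have h2 := congrArg Walk.length ((P u).take_spec hv)
      rw [Walk.length_append, h1] at h2
      omega
    · exact (hPu v _ ((hP u).cons hv)).symm
  have hx0 : (P x0).length = 0 := by
    rw [← hPu x0 Walk.nil Walk.IsPath.nil]; rfl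
  refine ⟨fun v => (P v).length, hx0, ?_, ?_⟩
  · intro u v h heq
    simp only at heq
    by_cases hu : u ∈ (P v).support
    · have h1 : (P v).dropUntil u hu = P u := hPu u _ ((hP v).dropUntil hu)
      have h2 := congrArg Walk.length ((P v).take_spec hu)
      rw [Walk.length_append, h1] at h2
      have h3 : ((P v).takeUntil u hu).length ≠ 0 := by
        intro h0
        exact h.ne' (Walk.eq_of_length_eq_zero (p := (P v).takeUntil u hu) h0)
      omega
    · have h1 : Walk.cons h (P v) = P u := hPu u _ ((hP v).cons hu)
      have := congrArg Walk.length h1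
      rw [Walk.length_cons] at this
      omega
  · intro v u1 u2 h1 h2 hl1 hl2
    have e1 := key h1 hl1
    have e2 := key h2 hl2
    have g1 : (P v).getVert 1 = u1 := by rw [e1]; simp
    have g2 : (P v).getVert 1 = u2 := by rw [e2]; simp
    rw [← g1, g2]


open SimpleGraph Walk

private def copyTree {α : Type*} (T : SimpleGraph α) (x0 : α) (K : ℕ) :
    SimpleGraph (α × Fin K) where
  Adj a b := (a.2 = b.2 ∧ T.Adj a.1 b.1) ∨
    (a.1 = x0 ∧ b.1 = x0 ∧ ((a.2 : ℕ) + 1 = (b.2 : ℕ) ∨ (b.2 : ℕ) + 1 = (a.2 : ℕ)))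
  symm := by
    refine ⟨?_⟩
    rintro ⟨x, k⟩ ⟨y, j⟩ (⟨h1, h2⟩ | ⟨h1, h2, h3⟩)
    · exact Or.inl ⟨h1.symm, h2.symm⟩
    · exact Or.inr ⟨h2, h1, h3.symm⟩
  loopless := by
    refine ⟨?_⟩
    rintro ⟨x, k⟩ (⟨h1, h2⟩ | ⟨h1, h2, h3⟩)
    · exact h2.ne rfl
    · omega

private lemma copyTree_isTree {α : Type*} {T : SimpleGraph α} (hT : T.IsTree) (x0 : α)
    (K : ℕ) (hK : 0 < K) : (copyTree T x0 K).IsTree := by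
  obtain ⟨ρ, hρ0, hne, huniq⟩ := tree_rank hT x0
  constructor
  · -- connected
    have hNE : Nonempty (α × Fin K) := ⟨(x0, ⟨0, hK⟩)⟩
    have reach_root : ∀ (x : α) (k : Fin K),
        (copyTree T x0 K).Reachable (x, k) (x0, k) := fun x k =>
      (hT.isConnected.preconnected x x0).map
        ⟨fun y => (y, k), fun {a b} h => Or.inl ⟨rfl, h⟩⟩
    have chain : ∀ (n : ℕ) (hn : n < K),
        (copyTree T x0 K).Reachable (x0, ⟨n, hn⟩) (x0, ⟨0, hK⟩) := by
      intro n
      induction n with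
      | zero => intro hn; rfl
      | succ m ih =>
        intro hn
        have hm : m < K := Nat.lt_of_succ_lt hn
        have hadj : (copyTree T x0 K).Adj (x0, ⟨m + 1, hn⟩) (x0, ⟨m, hm⟩) :=
          Or.inr ⟨rfl, rfl, Or.inr rfl⟩
        exact hadj.reachable.trans (ih hm)
    refine Connected.mk ?_
    rintro ⟨x, k⟩ ⟨y, j⟩
    refine ((reach_root x k).trans (chain k.1 k.2)).trans ?_
    exact ((reach_root y j).trans (chain j.1 j.2)).symm
  · -- acyclic
    apply acyclic_of_rank _ (fun z => ρ z.1 + (z.2 : ℕ))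
    · intro u v huv heq
      obtain ⟨x, k⟩ := u; obtain ⟨y, j⟩ := v
      simp only at heq
      rcases huv with ⟨h1, h2⟩ | ⟨h1, h2, h3⟩
      · simp only at h1 h2
        subst h1
        exact hne h2 (by omega)
      · simp only at h1 h2 h3
        subst h1; subst h2
        rw [hρ0] at heq
        omega
    · intro v u1 u2 had1 had2 hlt1 hlt2
      obtain ⟨x, k⟩ := v; obtain ⟨a, i⟩ := u1; obtain ⟨b, j⟩ := u2
      simp only at hlt1 hlt2
      rcases had1 with ⟨h1, h2⟩ | ⟨h1, h2, h3⟩ <;> rcases had2 with ⟨g1, g2⟩ | ⟨g1, g2, g3⟩ <;>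
        simp only at h1 h2 g1 g2 ⊢
      · subst h1; subst g1
        have : a = b := huniq h2 g2 (by omega) (by omega)
        rw [this]
      · subst h1; subst g1
        rw [hρ0] at hlt1
        omega
      · subst g1; subst h1
        rw [hρ0] at hlt2
        omega
      · subst h1
        rcases h2 with rfl
        rcases g2 with rfl
        rw [hρ0] at hlt1 hlt2
        simp only at h3 g3
        have : (i : ℕ) = (j : ℕ) := by omega
        rw [Fin.ext this]

private lemma copyTree_induce_conn {α : Type*} {T : SimpleGraph α} (x0 : α) (K : ℕ)
    (S : Set α) (hconn : (T.induce S).Connected) (k : Fin K) :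
    ((copyTree T x0 K).induce ((fun y => (y, k)) '' S)).Connected := by
  have e : T.induce S ≃g (copyTree T x0 K).induce ((fun y => (y, k)) '' S) := by
    refine ⟨Equiv.Set.image (fun y => (y, k)) S (fun a b h => by
      simpa using congrArg Prod.fst h), ?_⟩
    rintro ⟨a, ha⟩ ⟨b, hb⟩
    constructor
    · rintro (⟨h1, h2⟩ | ⟨h1, h2, h3⟩)
      · exact h2
      · change (k : ℕ) + 1 = k ∨ (k : ℕ) + 1 = k at h3
        omega
    · intro h
      exact Or.inl ⟨rfl, h⟩
  exact e.connected_iff.mp hconn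


private lemma band_succ {p r a : ℕ} (hp : 0 < p) (hr : r < p) (ha : a % p ≠ r) :
    (a + 1 + (p - 1 - r)) / p = (a + (p - 1 - r)) / p := by
  have hdvd : ¬ p ∣ (a + (p - 1 - r) + 1) := by
    rintro ⟨t, ht⟩
    rcases t with _ | u
    · omega
    · rw [Nat.mul_succ] at ht
      apply ha
      have hau : a = p * u + r := by omega
      rw [hau, Nat.mul_add_mod]
      exact Nat.mod_eq_of_lt hr
  rw [show a + 1 + (p - 1 - r) = (a + (p - 1 - r)) + 1 by omega,
    Nat.succ_div, if_neg hdvd, add_zero]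

private lemma band_adj_eq {p r a b : ℕ} (hp : 0 < p) (hr : r < p) (ha : a % p ≠ r)
    (hb : b % p ≠ r) (h1 : a ≤ b + 1) (h2 : b ≤ a + 1) :
    (a + (p - 1 - r)) / p = (b + (p - 1 - r)) / p := by
  have : b = a ∨ b = a + 1 ∨ a = b + 1 := by omega
  rcases this with rfl | rfl | heq
  · rfl
  · exact (band_succ hp hr ha).symm
  · rw [heq]
    exact band_succ hp hr hb

private lemma band_mem_Ico {p r a k : ℕ} (hp : 0 < p) (hr : r < p) (ha : a % p ≠ r)
    (hband : (a + (p - 1 - r)) / p = k) :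
    a ∈ Finset.Ico (k * p + r + 1 - p) (k * p + r) := by
  have h1 : k * p ≤ a + (p - 1 - r) := by
    rw [← hband]
    exact Nat.div_mul_le_self _ _
  have h2 : a + (p - 1 - r) < (k + 1) * p := by
    rw [← hband]
    exact (Nat.div_lt_iff_lt_mul hp).mp (Nat.lt_succ_self _)
  have h3 : a ≠ k * p + r := by
    intro e
    apply ha
    rw [e, mul_comm k p, Nat.mul_add_mod]
    exact Nat.mod_eq_of_lt hr
  rw [Finset.mem_Ico]
  have h2' : a + (p - 1 - r) < k * p + p := by
    have : (k + 1) * p = k * p + p := by ring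
    omega
  constructor <;> (generalize k * p = m at *; omega)

open SimpleGraph Walk

section
variable {V : Type*}

private lemma exists_decomp_removed [Fintype V] (G : SimpleGraph V)
    (c p r : ℕ) (hp : 0 < p) (hr : r < p)
    (D : TreeDecomp G) (ℓ : V → ℕ)
    (hℓ : ∀ ⦃v w : V⦄, G.Adj v w → ℓ v ≤ ℓ w + 1 ∧ ℓ w ≤ ℓ v + 1)
    (hbag : ∀ (x : D.ι) (i : ℕ), ((D.bag x).filter (fun v => ℓ v = i)).card ≤ c) :
    ∃ D' : TreeDecomp (G.induce {v : V | ¬ ℓ v % p = r}),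
      ∀ z, (D'.bag z).card ≤ (p - 1) * c := by
  classical
  set S : Set V := {v : V | ¬ ℓ v % p = r} with hS
  set band : V → ℕ := fun v => (ℓ v + (p - 1 - r)) / p with hband
  set K : ℕ := (Finset.univ.sup band) + 1 with hKdef
  have hK : ∀ v : V, band v < K := fun v =>
    Nat.lt_succ_of_le (Finset.le_sup (Finset.mem_univ v))
  have hKpos : 0 < K := Nat.succ_pos _
  letI := D.fint
  have hx0 : Nonempty D.ι := D.nonempty
  obtain ⟨x0⟩ := hx0
  refine ⟨⟨D.ι × Fin K, inferInstance, ⟨(x0, ⟨0, hKpos⟩)⟩,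
    copyTree D.tree x0 K, copyTree_isTree D.isTree x0 K hKpos,
    fun z => ((D.bag z.1).filter (fun v => band v = (z.2 : ℕ))).subtype (· ∈ S),
    ?_, ?_⟩, ?_⟩
  · -- edge_mem
    rintro ⟨v, hv⟩ ⟨w, hw⟩ hadj
    have hGadj : G.Adj v w := hadj
    obtain ⟨x, hvx, hwx⟩ := D.edge_mem hGadj
    have hbands : band v = band w := by
      have h12 := hℓ hGadj
      exact band_adj_eq hp hr hv hw h12.1 h12.2
    refine ⟨(x, ⟨band v, hK v⟩), ?_, ?_⟩
    · rw [Finset.mem_subtype, Finset.mem_filter]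
      exact ⟨hvx, rfl⟩
    · rw [Finset.mem_subtype, Finset.mem_filter]
      exact ⟨hwx, hbands.symm⟩
  · -- support_conn
    rintro ⟨v, hv⟩
    have hset : {z : D.ι × Fin K |
        (⟨v, hv⟩ : S) ∈ ((D.bag z.1).filter (fun u => band u = (z.2 : ℕ))).subtype (· ∈ S)} =
        (fun y => (y, (⟨band v, hK v⟩ : Fin K))) '' {x : D.ι | v ∈ D.bag x} := by
      ext ⟨x, k⟩
      simp only [Set.mem_setOf_eq, Finset.mem_subtype, Finset.mem_filter, Set.mem_image,
        Prod.mk.injEq]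
      constructor
      · rintro ⟨h1, h2⟩
        refine ⟨x, h1, rfl, Fin.ext ?_⟩
        exact h2
      · rintro ⟨y, hy, rfl, rfl⟩
        exact ⟨hy, rfl⟩
    rw [hset]
    exact copyTree_induce_conn x0 K _ (D.support_conn v) _
  · -- card bound
    rintro ⟨x, k⟩
    rw [Finset.card_subtype]
    set F := ((D.bag x).filter (fun v => band v = (k : ℕ))).filter (· ∈ S) with hF
    have hsub : F ⊆ (Finset.Ico ((k : ℕ) * p + r + 1 - p) ((k : ℕ) * p + r)).biUnion
        (fun i => (D.bag x).filter (fun v => ℓ v = i)) := by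
      intro v hvF
      rw [hF, Finset.mem_filter, Finset.mem_filter] at hvF
      obtain ⟨⟨hvb, hvk⟩, hvS⟩ := hvF
      rw [Finset.mem_biUnion]
      exact ⟨ℓ v, band_mem_Ico hp hr hvS hvk, Finset.mem_filter.2 ⟨hvb, rfl⟩⟩
    calc F.card ≤ _ := Finset.card_le_card hsub
      _ ≤ ∑ i ∈ Finset.Ico ((k : ℕ) * p + r + 1 - p) ((k : ℕ) * p + r),
            ((D.bag x).filter (fun v => ℓ v = i)).card := Finset.card_biUnion_le
      _ ≤ ∑ _i ∈ Finset.Ico ((k : ℕ) * p + r + 1 - p) ((k : ℕ) * p + r), c :=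
            Finset.sum_le_sum (fun i _ => hbag x i)
      _ ≤ (p - 1) * c := by
            rw [Finset.sum_const, smul_eq_mul, Nat.card_Ico]
            have : (k : ℕ) * p + r - ((k : ℕ) * p + r + 1 - p) ≤ p - 1 := by
              generalize (k : ℕ) * p = m
              omega
            exact Nat.mul_le_mul_right c this

end

private lemma exists_decomp_union {V : Type*} (G : SimpleGraph V) (s : Set V) (W : Finset V)
    (hW : ∀ v : V, v ∈ s ↔ v ∉ W) (D' : TreeDecomp (G.induce s)) (B : ℕ)
    (hB : ∀ z, (D'.bag z).card ≤ B) :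
    ∃ D : TreeDecomp G, ∀ z, (D.bag z).card ≤ B + W.card := by
  classical
  letI := Classical.decEq V
  have hmem : ∀ (u : s) , ∃ x, u ∈ D'.bag x := by
    intro u
    have := (D'.support_conn u).nonempty
    obtain ⟨⟨x, hx⟩⟩ := this
    exact ⟨x, hx⟩
  refine ⟨⟨D'.ι, D'.fint, D'.nonempty, D'.tree, D'.isTree,
    fun z => (D'.bag z).image Subtype.val ∪ W, ?_, ?_⟩, ?_⟩
  · -- edge_mem
    intro v w hadj
    by_cases hv : v ∈ W <;> by_cases hw : w ∈ W
    · obtain ⟨x⟩ := D'.nonempty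
      exact ⟨x, Finset.mem_union_right _ hv, Finset.mem_union_right _ hw⟩
    · have hws : w ∈ s := (hW w).2 hw
      obtain ⟨x, hx⟩ := hmem ⟨w, hws⟩
      exact ⟨x, Finset.mem_union_right _ hv,
        Finset.mem_union_left _ (Finset.mem_image.2 ⟨_, hx, rfl⟩)⟩
    · have hvs : v ∈ s := (hW v).2 hv
      obtain ⟨x, hx⟩ := hmem ⟨v, hvs⟩
      exact ⟨x, Finset.mem_union_left _ (Finset.mem_image.2 ⟨_, hx, rfl⟩),
        Finset.mem_union_right _ hw⟩
    · have hvs : v ∈ s := (hW v).2 hv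
      have hws : w ∈ s := (hW w).2 hw
      have : (G.induce s).Adj ⟨v, hvs⟩ ⟨w, hws⟩ := hadj
      obtain ⟨x, hx1, hx2⟩ := D'.edge_mem this
      exact ⟨x, Finset.mem_union_left _ (Finset.mem_image.2 ⟨_, hx1, rfl⟩),
        Finset.mem_union_left _ (Finset.mem_image.2 ⟨_, hx2, rfl⟩)⟩
  · -- support_conn
    intro v
    by_cases hv : v ∈ W
    · have hset : {x : D'.ι | v ∈ (D'.bag x).image Subtype.val ∪ W} = Set.univ := by
        ext x
        simp [Finset.mem_union, hv]
      rw [hset]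
      rw [(induceUnivIso D'.tree).connected_iff]
      exact D'.isTree.isConnected
    · have hvs : v ∈ s := (hW v).2 hv
      have hset : {x : D'.ι | v ∈ (D'.bag x).image Subtype.val ∪ W} =
          {x : D'.ι | (⟨v, hvs⟩ : s) ∈ D'.bag x} := by
        ext x
        simp only [Set.mem_setOf_eq, Finset.mem_union, Finset.mem_image, hv, or_false]
        constructor
        · rintro ⟨⟨u, hu⟩, hmem', rfl⟩
          exact hmem'
        · intro h
          exact ⟨_, h, rfl⟩
      rw [hset]
      exact D'.support_conn ⟨v, hvs⟩
  · intro z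
    calc ((D'.bag z).image Subtype.val ∪ W).card ≤
        ((D'.bag z).image Subtype.val).card + W.card := Finset.card_union_le _ _
      _ ≤ B + W.card := by
          exact Nat.add_le_add_right (Finset.card_image_le.trans (hB z)) _


/-- If `G` has `n` vertices and layered treewidth at most `c ≥ 1`, then
`tw(G) ≤ 2√(cn)`; more precisely, for every positive integer `p` there is a set `W` of
at most `n/p` vertices such that `G − W` has treewidth at most `c(p−1) − 1`, and hence
`tw(G) ≤ n/p + c(p−1) − 1`. -/
theorem ltw_treewidth_sqrt {V : Type*} [Fintype V] [Nonempty V] (G : SimpleGraph V)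
    (c : ℕ) (hc : 1 ≤ c) (h : ltwLE G c) :
    (treewidth G : ℝ) ≤ 2 * Real.sqrt (c * Fintype.card V) ∧
    ∀ p : ℕ, 0 < p → ∃ W : Finset V,
      (W.card : ℝ) ≤ (Fintype.card V : ℝ) / p ∧
      treewidth (G.induce {v : V | v ∉ W}) ≤ c * (p - 1) - 1 ∧
      (treewidth G : ℝ) ≤ (Fintype.card V : ℝ) / p + c * (p - 1) - 1 := by
  classical
  obtain ⟨D, ℓ, hℓ, hbag⟩ := h
  have hn : (1 : ℕ) ≤ Fintype.card V := Fintype.card_pos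
  have key : ∀ p : ℕ, 0 < p → ∃ W : Finset V,
      (W.card : ℝ) ≤ (Fintype.card V : ℝ) / p ∧
      treewidth (G.induce {v : V | v ∉ W}) ≤ c * (p - 1) - 1 ∧
      (treewidth G : ℝ) ≤ (Fintype.card V : ℝ) / p + c * (p - 1) - 1 := by
    intro p hp
    obtain ⟨r, hrmem, hrmin⟩ := Finset.exists_min_image (Finset.range p)
      (fun i => (Finset.univ.filter (fun v => ℓ v % p = i)).card) ⟨0, Finset.mem_range.2 hp⟩
    have hr : r < p := Finset.mem_range.1 hrmem
    set W : Finset V := Finset.univ.filter (fun v => ℓ v % p = r) with hWdef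
    have hsum : ∑ i ∈ Finset.range p, (Finset.univ.filter (fun v => ℓ v % p = i)).card
        = Fintype.card V := by
      rw [← Finset.card_univ]
      exact (Finset.card_eq_sum_card_fiberwise
        (fun v _ => Finset.mem_range.2 (Nat.mod_lt _ hp))).symm
    have hWp : W.card * p ≤ Fintype.card V := by
      calc W.card * p = ∑ _i ∈ Finset.range p, W.card := by
            rw [Finset.sum_const, Finset.card_range, smul_eq_mul, mul_comm]
        _ ≤ ∑ i ∈ Finset.range p, (Finset.univ.filter (fun v => ℓ v % p = i)).card :=
            Finset.sum_le_sum fun i hi => hrmin i hi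
        _ = _ := hsum
    have hp' : (0 : ℝ) < p := by exact_mod_cast hp
    have hWreal : (W.card : ℝ) ≤ (Fintype.card V : ℝ) / p := by
      rw [le_div_iff₀ hp']
      exact_mod_cast hWp
    have hSeq : {v : V | v ∉ W} = {v : V | ¬ ℓ v % p = r} := by
      ext v; simp [hWdef]
    obtain ⟨D', hD'⟩ := exists_decomp_removed G c p r hp hr D ℓ hℓ hbag
    have htw1 : treewidth (G.induce {v : V | v ∉ W}) ≤ c * (p - 1) - 1 := by
      rw [hSeq]
      apply Nat.sInf_le
      refine ⟨D', fun z => ?_⟩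
      have h2 := hD' z
      rw [mul_comm] at h2
      refine le_trans h2 ?_
      generalize c * (p - 1) = m
      omega
    obtain ⟨D2, hD2⟩ := exists_decomp_union G _ W (fun v => by
        constructor
        · intro hv
          simp only [Set.mem_setOf_eq] at hv
          simp [hWdef, hv]
        · intro hv
          simp only [hWdef, Finset.mem_filter, Finset.mem_univ, true_and] at hv
          simpa using hv) D' ((p - 1) * c) hD'
    have htw2 : treewidth G ≤ (p - 1) * c + W.card - 1 := by
      apply Nat.sInf_le
      refine ⟨D2, fun z => ?_⟩
      refine le_trans (hD2 z) ?_
      generalize (p - 1) * c = m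
      omega
    have hpos : 1 ≤ (p - 1) * c + W.card := by
      rcases Nat.lt_or_ge p 2 with h2 | h2
      · have hp1 : p = 1 := by omega
        subst hp1
        have hr0 : r = 0 := by omega
        subst hr0
        have hWuniv : W = Finset.univ := by
          ext v
          simp [hWdef, Nat.mod_one]
        have : W.card = Fintype.card V := by rw [hWuniv, Finset.card_univ]
        omega
      · have h3 : 1 ≤ p - 1 := by omega
        have h4 := Nat.mul_le_mul h3 hc
        omega
    refine ⟨W, hWreal, htw1, ?_⟩
    have hcast : (treewidth G : ℝ) ≤ (((p - 1) * c + W.card : ℕ) : ℝ) - 1 := by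
      have h4 : ((treewidth G : ℕ) : ℝ) ≤ (((p - 1) * c + W.card - 1 : ℕ) : ℝ) := by
        exact_mod_cast htw2
      refine h4.trans ?_
      rw [Nat.cast_sub hpos]
      simp
    have hp1 : (1 : ℕ) ≤ p := hp
    calc (treewidth G : ℝ) ≤ (((p - 1) * c + W.card : ℕ) : ℝ) - 1 := hcast
      _ = ((p : ℝ) - 1) * c + W.card - 1 := by
          rw [Nat.cast_add, Nat.cast_mul, Nat.cast_sub hp1]
          norm_num
      _ ≤ (Fintype.card V : ℝ) / p + c * ((p : ℝ) - 1) - 1 := by linarith [hWreal]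
  refine ⟨?_, key⟩
  have hn' : (0 : ℝ) < Fintype.card V := by exact_mod_cast hn
  have hc' : (0 : ℝ) < c := by exact_mod_cast hc
  set x : ℝ := Real.sqrt (Fintype.card V / c) with hx
  have hxpos : 0 < x := Real.sqrt_pos.2 (by positivity)
  set p : ℕ := ⌈x⌉₊ with hpdef
  have hp : 0 < p := Nat.ceil_pos.2 hxpos
  obtain ⟨W, hW1, hW2, hW3⟩ := key p hp
  have hpx : x ≤ (p : ℝ) := Nat.le_ceil x
  have hpx2 : (p : ℝ) - 1 ≤ x := by
    have := Nat.ceil_lt_add_one (le_of_lt hxpos)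
    have h5 : (p : ℝ) < x + 1 := by exact_mod_cast this
    linarith
  set s : ℝ := Real.sqrt (c * Fintype.card V) with hs
  have hspos : 0 < s := Real.sqrt_pos.2 (by positivity)
  have hmul : x * s = Fintype.card V := by
    rw [hx, hs, ← Real.sqrt_mul (by positivity)]
    rw [show (Fintype.card V : ℝ) / c * (c * Fintype.card V)
        = (Fintype.card V : ℝ) * Fintype.card V by field_simp]
    exact Real.sqrt_mul_self hn'.le
  have hdiv : (Fintype.card V : ℝ) / x = s := by
    rw [div_eq_iff hxpos.ne', ← hmul, mul_comm]
  have hmul2 : (c : ℝ) * x = s := by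
    rw [hx, hs, show (c : ℝ) = Real.sqrt (c ^ 2) from (Real.sqrt_sq hc'.le).symm,
      ← Real.sqrt_mul (by positivity)]
    congr 1
    field_simp
    rw [Real.sq_sqrt (by positivity)]
  have hf1 : (Fintype.card V : ℝ) / p ≤ s := by
    rw [← hdiv]
    exact div_le_div_of_nonneg_left hn'.le hxpos hpx
  have hf2 : (c : ℝ) * ((p : ℝ) - 1) ≤ s := by
    rw [← hmul2]
    exact mul_le_mul_of_nonneg_left hpx2 hc'.le
  calc (treewidth G : ℝ) ≤ (Fintype.card V : ℝ) / p + c * ((p : ℝ) - 1) - 1 := hW3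
    _ ≤ 2 * s := by linarith
end

section
/- Let G be a graph with n > c vertices and layered treewidth at most c ≥ 1. Then there is a set S of at most √(cn) vertices such that tw(G[S]) ≤ c − 1 and tw(G − S) ≤ √(cn). -/
open SimpleGraph

def parentGraph {ι : Type*} (parent : ι → ι) : SimpleGraph ι where
  Adj x y := x ≠ y ∧ (parent x = y ∨ parent y = x)
  symm := ⟨by rintro x y ⟨h1, h2⟩; exact ⟨h1.symm, h2.symm⟩⟩
  loopless := ⟨by rintro x ⟨h1, _⟩; exact h1 rfl⟩

lemma parentGraph_isAcyclic {ι : Type*} (parent : ι → ι) (r : ι) (depth : ι → ℕ)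
    (hr : parent r = r) (hd : ∀ x, x ≠ r → depth (parent x) < depth x) :
    (parentGraph parent).IsAcyclic := by
  classical
  have step : ∀ u x, (parentGraph parent).Adj u x → depth x ≤ depth u → parent u = x := by
    rintro u x ⟨hne, hpar⟩ hle
    rcases hpar with h | h
    · exact h
    · exfalso
      by_cases hx : x = r
      · subst hx; rw [hr] at h; exact hne h.symm
      · have := hd x hx; rw [h] at this; omega
  intro v c hc
  obtain ⟨u, hu_mem, hu_max⟩ := (c.support.toFinset).exists_max_image depth
    ⟨v, by simp [Walk.start_mem_support]⟩
  rw [List.mem_toFinset] at hu_mem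
  have hu_max' : ∀ z ∈ c.support, depth z ≤ depth u := by
    intro z hz; exact hu_max z (List.mem_toFinset.mpr hz)
  have hc' : (c.rotate u hu_mem).IsCycle := hc.rotate hu_mem
  have hsup : ∀ z ∈ (c.rotate u hu_mem).support, depth z ≤ depth u := by
    intro z hz
    rw [Walk.support_eq_cons] at hz
    rcases List.mem_cons.mp hz with h | h
    · exact h ▸ le_rfl
    · have h2 : z ∈ c.support.tail := (Walk.support_rotate c u hu_mem).mem_iff.mp h
      exact hu_max' z (by rw [Walk.support_eq_cons]; exact List.mem_cons_of_mem _ h2)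
  have hlen : 3 ≤ (c.rotate u hu_mem).length := hc'.three_le_length
  have hnn : ¬ (c.rotate u hu_mem).Nil := by
    rw [Walk.not_nil_iff_lt_length]; omega
  obtain ⟨x, hux, p, heq⟩ := Walk.not_nil_iff.mp hnn
  have hplen : 2 ≤ p.length := by
    have := heq ▸ hlen; simpa [Walk.length_cons] using this
  have hpnn : ¬ p.reverse.Nil := by
    rw [Walk.not_nil_iff_lt_length, Walk.length_reverse]; omega
  obtain ⟨y, huy, q, heq2⟩ := Walk.not_nil_iff.mp hpnn
  -- s(u,y) ∈ p.edges
  have hyedge : s(u, y) ∈ p.edges := by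
    have : s(u, y) ∈ p.reverse.edges := by rw [heq2]; simp
    rw [Walk.edges_reverse, List.mem_reverse] at this
    exact this
  -- x and y are in the support of the rotated cycle
  have hxs : x ∈ (c.rotate u hu_mem).support := by
    rw [heq, Walk.support_cons]
    exact List.mem_cons_of_mem _ (Walk.start_mem_support p)
  have hys : y ∈ (c.rotate u hu_mem).support := by
    have : y ∈ p.reverse.support := by
      rw [heq2, Walk.support_cons]
      exact List.mem_cons_of_mem _ (Walk.start_mem_support q)
    rw [Walk.support_reverse, List.mem_reverse] at this
    rw [heq, Walk.support_cons]
    exact List.mem_cons_of_mem _ this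
  have hpx : parent u = x := step u x hux (hsup x hxs)
  have hpy : parent u = y := step u y huy (hsup y hys)
  -- but edges of the cycle are nodup, contradiction
  have hnodup : (c.rotate u hu_mem).edges.Nodup := hc'.isCircuit.isTrail.edges_nodup
  rw [heq, Walk.edges_cons] at hnodup
  have : s(u, x) ∉ p.edges := (List.nodup_cons.mp hnodup).1
  have hxy : x = y := by rw [← hpx, hpy]
  rw [← hxy] at hyedge
  exact this hyedge

lemma eq_of_le_connected_acyclic {ι : Type*} {H T : SimpleGraph ι} (hle : H ≤ T)
    (hH : H.Connected) (hT : T.IsAcyclic) : H = T := by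
  classical
  ext x y
  constructor
  · exact fun h => hle h
  · intro hxy
    by_contra hH_adj
    have hreach : H.Reachable y x := hH.preconnected y x
    obtain ⟨w⟩ := hreach
    let p := w.toPath
    have hedges : ∀ e ∈ (p : H.Walk y x).edges, e ∈ T.edgeSet := by
      intro e he
      exact edgeSet_mono hle ((p : H.Walk y x).edges_subset_edgeSet he)
    let q : T.Walk y x := (p : H.Walk y x).transfer T hedges
    have hqpath : q.IsPath := (p.isPath).transfer hedges
    have hne : s(x, y) ∉ q.edges := by
      rw [Walk.edges_transfer]
      intro hmem
      exact hH_adj ((p : H.Walk y x).adj_of_mem_edges hmem)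
    have hcyc := Path.cons_isCycle ⟨q, hqpath⟩ hxy hne
    exact hT _ hcyc

lemma exists_parent {ι : Type*} {T : SimpleGraph ι} (hT : T.Connected) (r : ι) :
    ∃ parent : ι → ι, parent r = r ∧
      ∀ x, x ≠ r → T.Adj x (parent x) ∧ T.dist (parent x) r < T.dist x r := by
  classical
  have spec : ∀ x, x ≠ r → ∃ y, T.Adj x y ∧ T.dist y r < T.dist x r := by
    intro x hx
    obtain ⟨w, hw⟩ := hT.exists_walk_length_eq_dist x r
    cases w with
    | nil => exact absurd rfl hx
    | cons h q =>
      refine ⟨_, h, ?_⟩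
      have := T.dist_le q
      rw [Walk.length_cons] at hw
      omega
  refine ⟨fun x => if hx : x = r then r else Classical.choose (spec x hx), by simp, ?_⟩
  intro x hx
  simp only [dif_neg hx]
  exact Classical.choose_spec (spec x hx)

lemma parentGraph_connected {ι : Type*} [Nonempty ι] (parent : ι → ι) (r : ι) (depth : ι → ℕ)
    (hd : ∀ x, x ≠ r → depth (parent x) < depth x) :
    (parentGraph parent).Connected := by
  have key : ∀ n x, depth x ≤ n → (parentGraph parent).Reachable x r := by
    intro n
    induction n with
    | zero =>
      intro x hx
      by_contra hne
      have hxr : x ≠ r := by intro he; subst he; exact hne (Reachable.refl x)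
      have := hd x hxr; omega
    | succ n ih =>
      intro x hx
      by_cases hxr : x = r
      · subst hxr; exact Reachable.refl x
      · have hlt := hd x hxr
        have hadj : (parentGraph parent).Adj x (parent x) := by
          refine ⟨?_, Or.inl rfl⟩
          intro he
          rw [← he] at hlt; omega
        exact hadj.reachable.trans (ih (parent x) (by omega))
  constructor
  intro x y
  exact (key (depth x) x le_rfl).trans (key (depth y) y le_rfl).symm

lemma key_decomp {V : Type*} [Fintype V] (G : SimpleGraph V) (D : TreeDecomp G) (A : Set V)
    [DecidablePred (· ∈ A)] (f : V → ℕ) (b : ℕ) (hb : 1 ≤ b)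
    (hf : ∀ v w, v ∈ A → w ∈ A → G.Adj v w → f v = f w)
    (hcard : ∀ (x : D.ι) (j : ℕ), ((D.bag x).filter (fun v => v ∈ A ∧ f v = j)).card ≤ b) :
    treewidth (G.induce A) ≤ b - 1 := by
  classical
  haveI := D.fint
  obtain ⟨r⟩ := D.nonempty
  obtain ⟨parent, hpr, hp⟩ := exists_parent D.isTree.isConnected r
  have hle : parentGraph parent ≤ D.tree := by
    rintro x y ⟨hne, hpar | hpar⟩
    · by_cases hx : x = r
      · exfalso; subst hx; rw [hpr] at hpar; exact hne hpar
      · exact hpar ▸ (hp x hx).1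
    · by_cases hy : y = r
      · exfalso; subst hy; rw [hpr] at hpar; exact hne hpar.symm
      · exact ((hpar ▸ (hp y hy).1) : D.tree.Adj y x).symm
  have hconn0 : (parentGraph parent).Connected := by
    haveI : Nonempty D.ι := ⟨r⟩
    exact parentGraph_connected parent r (fun x => D.tree.dist x r) (fun x hx => (hp x hx).2)
  have hT0 : parentGraph parent = D.tree :=
    eq_of_le_connected_acyclic hle hconn0 D.isTree.2
  set M := Finset.univ.sup f with hM_def
  have hM : ∀ v, f v ≤ M := fun v => Finset.le_sup (Finset.mem_univ v)
  set parent' : D.ι × Fin (M+1) → D.ι × Fin (M+1) := fun p =>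
    if p.1 = r then (r, ⟨p.2.1 - 1, lt_of_le_of_lt (Nat.sub_le _ _) p.2.2⟩)
    else (parent p.1, p.2) with hparent'
  set depth' : D.ι × Fin (M+1) → ℕ := fun p => D.tree.dist p.1 r + p.2.1 with hdepth'
  have hroot' : parent' (r, ⟨0, Nat.succ_pos M⟩) = (r, ⟨0, Nat.succ_pos M⟩) := by
    simp [hparent']
  have hd' : ∀ p, p ≠ (r, ⟨0, Nat.succ_pos M⟩) → depth' (parent' p) < depth' p := by
    rintro ⟨a, j⟩ hne
    by_cases ha : a = r
    · subst ha
      have hj : j.1 ≠ 0 := by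
        intro h0
        exact hne (by rw [Prod.mk.injEq]; exact ⟨rfl, Fin.ext h0⟩)
      simp only [hparent', hdepth', if_pos rfl, SimpleGraph.dist_self]
      omega
    · have hlt := (hp a ha).2
      simp only [hparent', hdepth', if_neg ha]
      omega
  haveI : Nonempty (D.ι × Fin (M+1)) := ⟨(r, ⟨0, Nat.succ_pos M⟩)⟩
  have htree' : (parentGraph parent').IsTree :=
    ⟨parentGraph_connected parent' _ depth' hd',
     parentGraph_isAcyclic parent' _ depth' hroot' hd'⟩
  have hadj_copy : ∀ (a b : D.ι) (j : Fin (M+1)),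
      (parentGraph parent').Adj (a, j) (b, j) ↔ D.tree.Adj a b := by
    intro a b j
    rw [← hT0]
    constructor
    · rintro ⟨hne, h | h⟩
      · by_cases ha : a = r
        · exfalso
          rw [hparent'] at h
          simp only [ha, if_pos] at h
          rw [Prod.mk.injEq] at h
          exact hne (by rw [Prod.mk.injEq]; exact ⟨ha.trans h.1, rfl⟩)
        · rw [hparent'] at h
          simp only [if_neg ha] at h
          rw [Prod.mk.injEq] at h
          exact ⟨fun hab => hne (by rw [hab]), Or.inl h.1⟩
      · by_cases hbr : b = r
        · exfalso
          rw [hparent'] at h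
          simp only [hbr, if_pos] at h
          rw [Prod.mk.injEq] at h
          exact hne (by rw [Prod.mk.injEq]; exact ⟨h.1.symm.trans hbr.symm, rfl⟩)
        · rw [hparent'] at h
          simp only [if_neg hbr] at h
          rw [Prod.mk.injEq] at h
          exact ⟨fun hab => hne (by rw [hab]), Or.inr h.1⟩
    · rintro ⟨hne, h | h⟩
      · have ha : a ≠ r := by
          intro ha; subst ha; rw [hpr] at h; exact hne h
        refine ⟨?_, Or.inl ?_⟩
        · intro he; rw [Prod.mk.injEq] at he; exact hne he.1
        · rw [hparent']; simp only [if_neg ha]; rw [Prod.mk.injEq]; exact ⟨h, rfl⟩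
      · have hb' : b ≠ r := by
          intro hb'; subst hb'; rw [hpr] at h; exact hne h.symm
        refine ⟨?_, Or.inr ?_⟩
        · intro he; rw [Prod.mk.injEq] at he; exact hne he.1
        · rw [hparent']; simp only [if_neg hb']; rw [Prod.mk.injEq]; exact ⟨h, rfl⟩
  -- the tree decomposition of the induced graph
  let bag' : D.ι × Fin (M+1) → Finset ↥A := fun p =>
    Finset.univ.filter (fun v : ↥A => (v : V) ∈ D.bag p.1 ∧ f (v : V) = p.2.1)
  have hbag'_mem : ∀ (v : ↥A) (p : D.ι × Fin (M+1)),
      v ∈ bag' p ↔ ((v : V) ∈ D.bag p.1 ∧ f (v : V) = p.2.1) := by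
    intro v p; simp [bag']
  have hwidth : ∀ p, (bag' p).card ≤ b := by
    intro p
    have hsub : (bag' p).card ≤ ((D.bag p.1).filter (fun v => v ∈ A ∧ f v = p.2.1)).card := by
      apply Finset.card_le_card_of_injOn (fun v : ↥A => (v : V))
      · intro v hv
        rw [Finset.mem_coe, hbag'_mem] at hv
        simp only [Finset.mem_coe, Finset.mem_filter]
        exact ⟨hv.1, v.2, hv.2⟩
      · intro v _ w _ hvw
        exact Subtype.coe_injective hvw
    exact hsub.trans (hcard p.1 p.2.1)
  refine Nat.sInf_le ⟨⟨D.ι × Fin (M+1), inferInstance, ⟨(r, ⟨0, Nat.succ_pos M⟩)⟩,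
    parentGraph parent', htree', bag', ?_, ?_⟩, ?_⟩
  · -- edge_mem
    intro v w hvw
    have hGadj : G.Adj (v : V) (w : V) := hvw
    obtain ⟨x, hvx, hwx⟩ := D.edge_mem hGadj
    refine ⟨(x, ⟨f (v : V), Nat.lt_succ_of_le (hM _)⟩), ?_, ?_⟩
    · rw [hbag'_mem]; exact ⟨hvx, rfl⟩
    · rw [hbag'_mem]; exact ⟨hwx, (hf _ _ v.2 w.2 hGadj).symm⟩
  · -- support_conn
    intro v
    have h₀ := D.support_conn (v : V)
    set jv : Fin (M+1) := ⟨f (v : V), Nat.lt_succ_of_le (hM _)⟩ with hjv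
    set s' : Set (D.ι × Fin (M+1)) := {p | v ∈ bag' p} with hs'
    set s₀ : Set D.ι := {x | (v : V) ∈ D.bag x} with hs₀
    have hmem' : ∀ x : D.ι, x ∈ s₀ → ((x, jv) ∈ s') := by
      intro x hx
      rw [hs', Set.mem_setOf_eq, hbag'_mem]
      exact ⟨hx, rfl⟩
    let φ : ((D.tree.induce s₀) →g ((parentGraph parent').induce s')) :=
      ⟨fun x => ⟨(x.1, jv), hmem' x.1 x.2⟩, by
        intro a b hab
        have : D.tree.Adj a.1 b.1 := hab
        exact (hadj_copy a.1 b.1 jv).mpr this⟩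
    have hsurj : Function.Surjective φ := by
      rintro ⟨p, hp2⟩
      rw [hs', Set.mem_setOf_eq, hbag'_mem] at hp2
      refine ⟨⟨p.1, hp2.1⟩, ?_⟩
      apply Subtype.ext
      show (p.1, jv) = p
      rw [Prod.mk.injEq]
      exact ⟨rfl, Fin.ext hp2.2⟩
    exact Connected.map φ hsurj h₀
  · -- width
    intro p
    show (bag' p).card ≤ (b - 1) + 1
    rw [Nat.sub_add_cancel hb]
    exact hwidth p

lemma mod_eq_pred_iff {k m s : ℕ} (hk : 2 ≤ k) (hm : m < k) (hs : s < k) :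
    (m + s) % k = k - 1 ↔ m + s = k - 1 := by
  constructor
  · intro h
    rcases Nat.lt_or_ge (m + s) k with h1 | h1
    · rwa [Nat.mod_eq_of_lt h1] at h
    · have h2 : (m + s) % k = m + s - k := by
        rw [Nat.mod_eq_sub_mod h1, Nat.mod_eq_of_lt (by omega)]
      omega
  · intro h
    rw [h, Nat.mod_eq_of_lt (by omega)]

lemma succ_mod_of_pred {k a : ℕ} (hk : 2 ≤ k) (ha : a % k = k - 1) : (a + 1) % k = 0 := by
  have h3 := Nat.div_add_mod a k
  rw [ha] at h3
  have h2 : a + 1 = k * (a / k) + k := by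
    set t := k * (a / k) with ht
    omega
  rw [h2, ← Nat.mul_succ]
  exact Nat.mul_mod_right _ _

lemma succ_div_eq {k a : ℕ} (hk : 2 ≤ k) (ha : a % k ≠ k - 1) : (a + 1) / k = a / k := by
  have hm : a % k < k := Nat.mod_lt _ (by omega)
  have h1 : (a + 1) % k = a % k + 1 := by
    rw [Nat.add_mod, Nat.mod_eq_of_lt (show (1:ℕ) < k by omega)]
    exact Nat.mod_eq_of_lt (by omega)
  have h2 := Nat.div_add_mod (a + 1) k
  have h3 := Nat.div_add_mod a k
  have h4 : k * ((a + 1) / k) = k * (a / k) := by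
    rw [h1] at h2; linarith
  exact Nat.eq_of_mul_eq_mul_left (by omega) h4

/-- If `G` has `n > c` vertices and layered treewidth at most `c ≥ 1`, then there is a
set `S` of at most `√(cn)` vertices with `tw(G[S]) ≤ c − 1` and `tw(G − S) ≤ √(cn)`. -/
theorem ltw_separator {V : Type*} [Fintype V] (G : SimpleGraph V)
    (c : ℕ) (hc : 1 ≤ c) (hn : c < Fintype.card V) (h : ltwLE G c) :
    ∃ S : Finset V,
      (S.card : ℝ) ≤ Real.sqrt (c * Fintype.card V) ∧
      treewidth (G.induce ((S : Set V))) ≤ c - 1 ∧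
      (treewidth (G.induce {v : V | v ∉ S}) : ℝ) ≤ Real.sqrt (c * Fintype.card V) := by
  classical
  obtain ⟨D, ℓ, hℓ, hbag⟩ := h
  set n := Fintype.card V with hn_def
  have hc0 : (0:ℝ) < c := by exact_mod_cast hc
  have hn0 : 0 < n := by omega
  set x₀ : ℝ := Real.sqrt ((n : ℝ) / c) with hx₀
  set k := ⌈x₀⌉₊ with hk_def
  have hx₀_gt : (1:ℝ) < x₀ := by
    rw [hx₀, show (1:ℝ) = Real.sqrt 1 from Real.sqrt_one.symm]
    apply Real.sqrt_lt_sqrt (by norm_num)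
    rw [lt_div_iff₀ hc0, one_mul]
    exact_mod_cast hn
  have hk2 : 2 ≤ k := by
    have h1 : 1 < k := by
      rw [hk_def]
      exact Nat.lt_ceil.mpr (by exact_mod_cast hx₀_gt)
    omega
  have hkx : x₀ ≤ (k:ℝ) := Nat.le_ceil x₀
  have hkx2 : (k:ℝ) < x₀ + 1 := Nat.ceil_lt_add_one (Real.sqrt_nonneg _)
  -- choose the residue class with the fewest vertices
  have hfib : ∀ v : V, k - 1 - ℓ v % k ∈ Finset.range k :=
    fun v => Finset.mem_range.mpr (by omega)
  have hsum : ∑ t ∈ Finset.range k,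
      (Finset.univ.filter (fun v : V => k - 1 - ℓ v % k = t)).card = n := by
    rw [hn_def, ← Finset.card_univ]
    exact (Finset.card_eq_sum_card_fiberwise (fun v _ => hfib v)).symm
  obtain ⟨s, hs_range, hs_min⟩ : ∃ s ∈ Finset.range k,
      k * (Finset.univ.filter (fun v : V => k - 1 - ℓ v % k = s)).card ≤ n := by
    by_contra hcon
    push_neg at hcon
    have h2 : k * (n+1) ≤ k * n := by
      calc k * (n+1) = ∑ _t ∈ Finset.range k, (n+1) := by
            rw [Finset.sum_const, Finset.card_range, smul_eq_mul]
        _ ≤ ∑ t ∈ Finset.range k,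
              k * (Finset.univ.filter (fun v : V => k - 1 - ℓ v % k = t)).card :=
            Finset.sum_le_sum (fun t ht => hcon t ht)
        _ = k * ∑ t ∈ Finset.range k,
              (Finset.univ.filter (fun v : V => k - 1 - ℓ v % k = t)).card :=
            (Finset.mul_sum _ _ _).symm
        _ = k * n := by rw [hsum]
    have h3 : k * (n+1) = k*n + k := Nat.mul_succ k n
    have h4 : k ≤ 0 := by linarith
    omega
  have hs_lt : s < k := Finset.mem_range.mp hs_range
  set S := Finset.univ.filter (fun v : V => k - 1 - ℓ v % k = s) with hS
  have hSmem : ∀ v : V, v ∈ S ↔ (ℓ v + s) % k = k - 1 := by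
    intro v
    rw [hS, Finset.mem_filter]
    simp only [Finset.mem_univ, true_and]
    have hm : ℓ v % k < k := Nat.mod_lt _ (by omega)
    rw [Nat.add_mod, Nat.mod_eq_of_lt hs_lt, mod_eq_pred_iff hk2 hm hs_lt]
    omega
  -- key real facts
  have hx₀sq : x₀^2 = (n:ℝ)/c := Real.sq_sqrt (by positivity)
  have h2 : Real.sqrt ((c:ℝ)*(n:ℝ)) = (c:ℝ) * x₀ := by
    rw [hx₀, show (c:ℝ)*(n:ℝ) = (c:ℝ)^2 * ((n:ℝ)/(c:ℝ)) from by field_simp]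
    rw [Real.sqrt_mul (sq_nonneg _), Real.sqrt_sq (le_of_lt hc0)]
  have hsqrt_mul : x₀ * Real.sqrt ((c:ℝ)*(n:ℝ)) = n := by
    rw [h2]
    calc x₀ * ((c:ℝ) * x₀) = (c:ℝ) * x₀^2 := by ring
      _ = (c:ℝ) * ((n:ℝ)/c) := by rw [hx₀sq]
      _ = n := by field_simp
  refine ⟨S, ?_, ?_, ?_⟩
  · -- size of S
    have h1 : (k:ℝ) * S.card ≤ n := by exact_mod_cast hs_min
    have h2' : (n:ℝ) ≤ (k:ℝ) * Real.sqrt ((c:ℝ)*(n:ℝ)) := by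
      calc (n:ℝ) = x₀ * Real.sqrt ((c:ℝ)*(n:ℝ)) := hsqrt_mul.symm
        _ ≤ (k:ℝ) * Real.sqrt ((c:ℝ)*(n:ℝ)) :=
          mul_le_mul_of_nonneg_right hkx (Real.sqrt_nonneg _)
    have hk0 : (0:ℝ) < k := by exact_mod_cast (by omega : 0 < k)
    exact le_of_mul_le_mul_left (h1.trans h2') hk0
  · -- treewidth of G[S]
    refine key_decomp G D _ ℓ c hc ?_ ?_
    · intro v w hv hw hadj
      rw [Finset.mem_coe, hSmem] at hv hw
      have hlw := hℓ hadj
      rcases Nat.lt_trichotomy (ℓ v) (ℓ w) with hh | hh | hh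
      · exfalso
        have hz := succ_mod_of_pred hk2 hv
        rw [show ℓ w + s = ℓ v + s + 1 from by omega] at hw
        omega
      · exact hh
      · exfalso
        have hz := succ_mod_of_pred hk2 hw
        rw [show ℓ v + s = ℓ w + s + 1 from by omega] at hv
        omega
    · intro x j
      refine le_trans (Finset.card_le_card ?_) (hbag x j)
      intro v hv
      rw [Finset.mem_filter] at hv ⊢
      exact ⟨hv.1, hv.2.2⟩
  · -- treewidth of G - S
    have hb1 : 1 ≤ c * (k - 1) := by
      have := Nat.mul_pos (show 0 < c by omega) (show 0 < k - 1 by omega)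
      omega
    have htw : treewidth (G.induce {v : V | v ∉ S}) ≤ c * (k - 1) - 1 := by
      refine key_decomp G D _ (fun v => (ℓ v + s) / k) (c * (k-1)) hb1 ?_ ?_
      · intro v w hv hw hadj
        rw [Set.mem_setOf_eq, hSmem] at hv hw
        have hlw := hℓ hadj
        show (ℓ v + s) / k = (ℓ w + s) / k
        rcases Nat.lt_trichotomy (ℓ v) (ℓ w) with hh | hh | hh
        · rw [show ℓ w + s = ℓ v + s + 1 from by omega]
          exact (succ_div_eq hk2 hv).symm
        · rw [hh]
        · rw [show ℓ v + s = ℓ w + s + 1 from by omega]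
          exact succ_div_eq hk2 hw
      · intro x q
        have hsub : (D.bag x).filter
              (fun v => v ∈ {v : V | v ∉ S} ∧ (ℓ v + s) / k = q) ⊆
            (Finset.range (k-1)).biUnion
              (fun t => (D.bag x).filter (fun v => ℓ v + s = q * k + t)) := by
          intro v hv
          rw [Finset.mem_filter] at hv
          obtain ⟨hvb, hvA, hvq⟩ := hv
          rw [Set.mem_setOf_eq, hSmem] at hvA
          have hm : (ℓ v + s) % k < k := Nat.mod_lt _ (by omega)
          rw [Finset.mem_biUnion]
          refine ⟨(ℓ v + s) % k, Finset.mem_range.mpr (by omega), ?_⟩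
          rw [Finset.mem_filter]
          refine ⟨hvb, ?_⟩
          have h3 := Nat.div_add_mod (ℓ v + s) k
          rw [hvq] at h3
          rw [mul_comm q k]
          exact h3.symm
        refine le_trans (Finset.card_le_card hsub) (le_trans Finset.card_biUnion_le ?_)
        have hone : ∀ t ∈ Finset.range (k-1),
            ((D.bag x).filter (fun v => ℓ v + s = q*k + t)).card ≤ c := by
          intro t _
          refine le_trans (Finset.card_le_card ?_) (hbag x (q*k + t - s))
          intro v hv
          rw [Finset.mem_filter] at hv ⊢
          exact ⟨hv.1, by omega⟩
        calc ∑ t ∈ Finset.range (k-1),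
              ((D.bag x).filter (fun v => ℓ v + s = q*k + t)).card
            ≤ ∑ _t ∈ Finset.range (k-1), c := Finset.sum_le_sum hone
          _ = (k-1) * c := by rw [Finset.sum_const, Finset.card_range, smul_eq_mul]
          _ = c * (k-1) := mul_comm _ _
    have hb' : ((c * (k-1) : ℕ) : ℝ) ≤ Real.sqrt ((c:ℝ)*(n:ℝ)) := by
      push_cast [Nat.cast_sub (show 1 ≤ k by omega)]
      have h1 : (k:ℝ) - 1 ≤ x₀ := by linarith
      calc (c:ℝ)*((k:ℝ)-1) ≤ (c:ℝ) * x₀ :=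
            mul_le_mul_of_nonneg_left h1 (le_of_lt hc0)
        _ = Real.sqrt ((c:ℝ)*(n:ℝ)) := h2.symm
    calc (treewidth (G.induce {v : V | v ∉ S}) : ℝ)
        ≤ ((c*(k-1) - 1 : ℕ) : ℝ) := by exact_mod_cast htw
      _ ≤ ((c*(k-1) : ℕ):ℝ) := by exact_mod_cast Nat.sub_le _ _
      _ ≤ Real.sqrt ((c:ℝ)*(n:ℝ)) := hb'
end

section
/- Let G be a graph with a layering (V_0, V_1, ..., V_m) and a tree-decomposition (B_x : x ∈ V(T)) such that |B_x ∩ V_i| ≤ c for every node x and layer V_i. Then for any k nodes x_1, ..., x_k ∈ V(T), the union X = B_{x_1} ∪ ... ∪ B_{x_k} satisfies: the sequence (X ∩ (V_0 ∪ V_1), X ∩ (V_1 ∪ V_2), ..., X ∩ (V_{m-1} ∪ V_m)) is a path-decomposition of G[X] of width at most 2ck − 1; hence the pathwidth of G[X] is at most 2ck − 1. -/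
open SimpleGraph

/-- A path-decomposition of `G` with bags `bag 0, bag 1, ...` (all empty beyond `m`):
every edge lies in some bag, every vertex lies in some bag, and the bags containing a
given vertex form an interval. -/
def IsPathDecomp {V : Type*} (G : SimpleGraph V) (m : ℕ) (bag : ℕ → Finset V) : Prop :=
  (∀ ⦃v w : V⦄, G.Adj v w → ∃ j ≤ m, v ∈ bag j ∧ w ∈ bag j) ∧
  (∀ v : V, ∃ j ≤ m, v ∈ bag j) ∧
  ∀ (v : V) (i j k : ℕ), i ≤ j → j ≤ k → v ∈ bag i → v ∈ bag k → v ∈ bag j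

/-- The pathwidth of `G`. -/
noncomputable def pathwidth {V : Type*} (G : SimpleGraph V) : ℕ :=
  sInf {w : ℕ | ∃ (m : ℕ) (bag : ℕ → Finset V),
    IsPathDecomp G m bag ∧ ∀ j, (bag j).card ≤ w + 1}

/-- A path-decomposition of the subgraph of `G` induced by `X`, with bags inside `X`. -/
def IsPathDecompOn {V : Type*} (G : SimpleGraph V) (X : Finset V) (m : ℕ)
    (bag : ℕ → Finset V) : Prop :=
  (∀ j, bag j ⊆ X) ∧
  (∀ ⦃v w : V⦄, G.Adj v w → v ∈ X → w ∈ X → ∃ j ≤ m, v ∈ bag j ∧ w ∈ bag j) ∧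
  (∀ v ∈ X, ∃ j ≤ m, v ∈ bag j) ∧
  ∀ (v : V) (i j k : ℕ), i ≤ j → j ≤ k → v ∈ bag i → v ∈ bag k → v ∈ bag j

/-- Given a layering `(V_0, …, V_m)` of `G` (encoded by `ℓ : V → ℕ` with `ℓ v ≤ m`) and
a tree-decomposition with each bag meeting each layer in at most `c` vertices, the union
`X` of any `k` bags admits the path-decomposition `(X ∩ (V_j ∪ V_{j+1}))_{j<m}` of
`G[X]` with bags of size at most `2ck`; hence the pathwidth of `G[X]` is at most
`2ck − 1`. -/
theorem union_of_bags_pathwidth {V : Type*} [DecidableEq V] (G : SimpleGraph V)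
    (D : TreeDecomp G) (ℓ : V → ℕ) (m : ℕ)
    (hlay : ∀ ⦃v w : V⦄, G.Adj v w → ℓ v ≤ ℓ w + 1 ∧ ℓ w ≤ ℓ v + 1)
    (hm : ∀ v : V, ℓ v ≤ m)
    (c : ℕ) (hc : ∀ (x : D.ι) (i : ℕ), ((D.bag x).filter (fun v => ℓ v = i)).card ≤ c)
    (k : ℕ) (xs : Fin k → D.ι) :
    IsPathDecompOn G (Finset.univ.biUnion (fun i : Fin k => D.bag (xs i))) (m - 1)
      (fun j => (Finset.univ.biUnion (fun i : Fin k => D.bag (xs i))).filter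
        (fun v => ℓ v = j ∨ ℓ v = j + 1)) ∧
    (∀ j : ℕ, ((Finset.univ.biUnion (fun i : Fin k => D.bag (xs i))).filter
        (fun v => ℓ v = j ∨ ℓ v = j + 1)).card ≤ 2 * c * k) ∧
    pathwidth (G.induce ((Finset.univ.biUnion (fun i : Fin k => D.bag (xs i)) : Set V)))
      ≤ 2 * c * k - 1 := by

  classical
  set X := (Finset.univ.biUnion (fun i : Fin k => D.bag (xs i))) with hX
  set bag : ℕ → Finset V := fun j => X.filter (fun v => ℓ v = j ∨ ℓ v = j + 1) with hbag
  have hsub : ∀ j, bag j ⊆ X := fun j => Finset.filter_subset _ _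
  have hedge : ∀ ⦃v w : V⦄, G.Adj v w → v ∈ X → w ∈ X →
      ∃ j ≤ m - 1, v ∈ bag j ∧ w ∈ bag j := by
    intro v w hadj hv hw
    obtain ⟨h1, h2⟩ := hlay hadj
    rcases lt_trichotomy (ℓ v) (ℓ w) with h | h | h
    · refine ⟨ℓ v, ?_, ?_, ?_⟩
      · have := hm w; omega
      · simp [hbag, hv]
      · simp only [hbag, Finset.mem_filter]; exact ⟨hw, Or.inr (by omega)⟩
    · refine ⟨ℓ v - 1, ?_, ?_, ?_⟩
      · have := hm v; omega
      · simp only [hbag, Finset.mem_filter]; exact ⟨hv, by omega⟩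
      · simp only [hbag, Finset.mem_filter]; exact ⟨hw, by omega⟩
    · refine ⟨ℓ w, ?_, ?_, ?_⟩
      · have := hm v; omega
      · simp only [hbag, Finset.mem_filter]; exact ⟨hv, Or.inr (by omega)⟩
      · simp [hbag, hw]
  have hvert : ∀ v ∈ X, ∃ j ≤ m - 1, v ∈ bag j := by
    intro v hv
    refine ⟨ℓ v - 1, by have := hm v; omega, ?_⟩
    simp only [hbag, Finset.mem_filter]; exact ⟨hv, by omega⟩
  have hint : ∀ (v : V) (i j k' : ℕ), i ≤ j → j ≤ k' → v ∈ bag i → v ∈ bag k' →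
      v ∈ bag j := by
    intro v i j k' hij hjk hi hk
    simp only [hbag, Finset.mem_filter] at hi hk ⊢
    exact ⟨hi.1, by omega⟩
  have hcard : ∀ j : ℕ, (bag j).card ≤ 2 * c * k := by
    intro j
    have : bag j = Finset.univ.biUnion
        (fun i : Fin k => (D.bag (xs i)).filter (fun v => ℓ v = j ∨ ℓ v = j + 1)) := by
      simp [hbag, hX, Finset.filter_biUnion]
    rw [this]
    calc _ ≤ ∑ i : Fin k, ((D.bag (xs i)).filter (fun v => ℓ v = j ∨ ℓ v = j + 1)).card :=
          Finset.card_biUnion_le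
      _ ≤ ∑ _i : Fin k, 2 * c := by
          refine Finset.sum_le_sum fun i _ => ?_
          have : (D.bag (xs i)).filter (fun v => ℓ v = j ∨ ℓ v = j + 1) =
              (D.bag (xs i)).filter (fun v => ℓ v = j) ∪
              (D.bag (xs i)).filter (fun v => ℓ v = j + 1) := Finset.filter_or _ _ _
          rw [this]
          calc _ ≤ _ := Finset.card_union_le _ _
            _ ≤ c + c := Nat.add_le_add (hc _ _) (hc _ _)
            _ = 2 * c := by ring
      _ = 2 * c * k := by simp [Finset.sum_const, mul_comm]
  refine ⟨⟨hsub, hedge, hvert, hint⟩, hcard, ?_⟩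
  -- pathwidth bound
  apply Nat.sInf_le
  refine ⟨m - 1, fun j => Finset.univ.filter (fun v : (X : Set V) => (v : V) ∈ bag j),
    ⟨?_, ?_, ?_⟩, ?_⟩
  · intro v w hadj
    have hv : (v : V) ∈ X := by exact_mod_cast v.2
    have hw : (w : V) ∈ X := by exact_mod_cast w.2
    obtain ⟨j, hj, h1, h2⟩ := hedge hadj hv hw
    exact ⟨j, hj, Finset.mem_filter.mpr ⟨Finset.mem_univ _, h1⟩,
      Finset.mem_filter.mpr ⟨Finset.mem_univ _, h2⟩⟩
  · intro v
    have hv : (v : V) ∈ X := by exact_mod_cast v.2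
    obtain ⟨j, hj, h1⟩ := hvert _ hv
    exact ⟨j, hj, Finset.mem_filter.mpr ⟨Finset.mem_univ _, h1⟩⟩
  · intro v i j k' hij hjk hi hk
    simp only [Finset.mem_filter, Finset.mem_univ, true_and] at hi hk ⊢
    exact hint _ _ _ _ hij hjk hi hk
  · intro j
    have h1 : (Finset.univ.filter (fun v : (X : Set V) => (v : V) ∈ bag j)).card
        ≤ (bag j).card := by
      refine Finset.card_le_card_of_injOn (fun v => (v : V))
        (fun v hv => (Finset.mem_filter.mp hv).2)
        (fun a _ b _ h => Subtype.ext h)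
    have h2 := hcard j
    exact le_trans (le_trans h1 h2) (by omega)
end

section
/- Let G be a graph, let (B_x : x ∈ V(T)) be a tree-decomposition of G, and suppose for each node x the torso G⟨B_x⟩ has a tree-decomposition D_x of width at most w such that every set B_x ∩ B_y (for edges xy of T) is contained in some bag of D_x. Then G has a tree-decomposition of width at most w obtained by joining, for each edge xy of T, a bag of D_x containing B_x ∩ B_y to a bag of D_y containing B_x ∩ B_y. -/
open SimpleGraph

/-- The torso `G⟨B_x⟩` at a node `x` of a tree-decomposition: the induced subgraph
`G[B_x]` with all edges added inside `B_x ∩ B_y` for each neighbour `y` of `x`. -/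
def torso {V : Type*} (G : SimpleGraph V) (D : TreeDecomp G) (x : D.ι) :
    SimpleGraph {v : V // v ∈ D.bag x} where
  Adj u v := u ≠ v ∧ (G.Adj u.1 v.1 ∨
    ∃ y : D.ι, D.tree.Adj x y ∧ u.1 ∈ D.bag y ∧ v.1 ∈ D.bag y)
  symm := by
    constructor
    rintro u v ⟨hne, h⟩
    refine ⟨hne.symm, ?_⟩
    rcases h with h | ⟨y, hy, h1, h2⟩
    · exact Or.inl h.symm
    · exact Or.inr ⟨y, hy, h2, h1⟩
  loopless := by constructor; rintro u ⟨hne, -⟩; exact hne rfl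

namespace GlueAux

variable {α : Type*}

/-- Walks preserve an invariant that is preserved along edges. -/
lemma cut_walk {H : SimpleGraph α} (φ : α → Prop)
    (hpres : ∀ ⦃a b⦄, H.Adj a b → (φ a ↔ φ b)) :
    ∀ {a b : α}, H.Walk a b → φ a → φ b := by
  intro a b w
  induction w with
  | nil => exact id
  | cons h p ih => exact fun ha => ih ((hpres h).mp ha)

lemma cut_no_reach {H : SimpleGraph α} (φ : α → Prop)
    (hpres : ∀ ⦃a b⦄, H.Adj a b → (φ a ↔ φ b)) {a b : α}
    (ha : φ a) (hb : ¬ φ b) : ¬ H.Reachable a b :=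
  fun r => r.elim fun w => hb (cut_walk φ hpres w ha)

/-- The graph `T` with vertex `x` isolated. -/
def avoid (T : SimpleGraph α) (x : α) : SimpleGraph α where
  Adj a b := T.Adj a b ∧ a ≠ x ∧ b ≠ x
  symm := by constructor; rintro a b ⟨h, h1, h2⟩; exact ⟨h.symm, h2, h1⟩
  loopless := ⟨fun a h => T.loopless.irrefl a h.1⟩

lemma avoid_le (T : SimpleGraph α) (x : α) : avoid T x ≤ T := fun _ _ h => h.1

lemma avoid_support {T : SimpleGraph α} {x : α} :
    ∀ {a b : α} (w : (avoid T x).Walk a b), a ≠ x → x ∉ w.support := by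
  intro a b w
  induction w with
  | nil => intro ha h; simp at h; exact ha h.symm
  | cons h p ih =>
    intro ha hx
    rw [SimpleGraph.Walk.support_cons] at hx
    rcases List.mem_cons.mp hx with h1 | h2
    · exact ha h1.symm
    · exact ih h.2.2 h2

lemma reach_congr {H : SimpleGraph α} {c a b : α} (h : H.Adj a b) :
    H.Reachable c a ↔ H.Reachable c b :=
  ⟨fun r => r.trans h.reachable, fun r => r.trans h.symm.reachable⟩

/-- In an acyclic graph, two neighbours of `x` that are joined avoiding `x` are equal. -/
lemma neighbor_unique {T : SimpleGraph α} (hT : T.IsAcyclic) {x a b : α}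
    (ha : T.Adj x a) (hb : T.Adj x b) (hr : (avoid T x).Reachable a b) : a = b := by
  by_contra hne
  obtain ⟨w⟩ := hr
  have hax : a ≠ x := fun h => (h ▸ ha).ne' rfl
  have hxsupp : x ∉ w.support := avoid_support w hax
  let w' : T.Walk a b := w.mapLe (avoid_le T x)
  have hsupp' : w'.support = w.support := by
    simp only [w', SimpleGraph.Walk.mapLe, SimpleGraph.Walk.support_map]
    exact List.map_id _
  classical
  set p := w'.toPath with hp
  have hxp : x ∉ p.1.support := fun h =>
    hxsupp (hsupp' ▸ SimpleGraph.Walk.support_toPath_subset w' h)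
  have hq2 : (SimpleGraph.Walk.cons ha p.1).IsPath :=
    (SimpleGraph.Walk.cons_isPath_iff _ _).mpr ⟨p.2, hxp⟩
  have hq1 : (SimpleGraph.Walk.cons hb (SimpleGraph.Walk.nil)).IsPath := by
    simp [SimpleGraph.Walk.isPath_def, hb.ne]
  have := hT.path_unique ⟨_, hq1⟩ ⟨_, hq2⟩
  have hsup := congrArg (fun q : T.Path x b => q.1.support) this
  simp only [SimpleGraph.Walk.support_cons, SimpleGraph.Walk.support_nil] at hsup
  rw [SimpleGraph.Walk.support_eq_cons p.1] at hsup
  injection hsup with h1 h2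
  injection h2 with h3 _
  exact hne h3.symm

end GlueAux

section Glue
open GlueAux

variable {V : Type*} {G : SimpleGraph V} (D : TreeDecomp G)
  (DI : D.ι → Type) (DT : ∀ x, SimpleGraph (DI x)) (f : ∀ x y : D.ι, DI x)

def glueTree : SimpleGraph (Σ x : D.ι, DI x) where
  Adj a b :=
    (∃ (x : D.ι) (u v : DI x), (DT x).Adj u v ∧ a = ⟨x, u⟩ ∧ b = ⟨x, v⟩) ∨
    (∃ x y : D.ι, D.tree.Adj x y ∧ a = ⟨x, f x y⟩ ∧ b = ⟨y, f y x⟩)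
  symm := by
    constructor
    rintro a b (⟨x, u, v, h, rfl, rfl⟩ | ⟨x, y, h, rfl, rfl⟩)
    · exact Or.inl ⟨x, v, u, h.symm, rfl, rfl⟩
    · exact Or.inr ⟨y, x, h.symm, rfl, rfl⟩
  loopless := by
    constructor
    rintro a (⟨x, u, v, h, rfl, h2⟩ | ⟨x, y, h, rfl, h2⟩)
    · obtain ⟨-, h3⟩ := Sigma.mk.inj_iff.mp h2
      exact h.ne (eq_of_heq h3)
    · exact h.ne (Sigma.mk.inj_iff.mp h2).1

variable {D DI DT f}

/-- the inclusion of one piece into the glued graph -/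
def inNode (x : D.ι) : DT x →g glueTree D DI DT f where
  toFun u := ⟨x, u⟩
  map_rel' := fun h => Or.inl ⟨x, _, _, h, rfl, rfl⟩

lemma glue_reach_aux (hDT : ∀ x, (DT x).Preconnected) :
    ∀ {x y : D.ι} (_ : D.tree.Walk x y) (u : DI x) (v : DI y),
      (glueTree D DI DT f).Reachable ⟨x, u⟩ ⟨y, v⟩ := by
  intro x y p
  induction p with
  | nil => exact fun u v => (hDT _ u v).map (inNode _)
  | @cons x x' y h q ih =>
    intro u v
    refine ((hDT x u (f x x')).map (inNode x)).trans (Reachable.trans ?_ (ih (f x' x) v))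
    exact Adj.reachable (show (glueTree D DI DT f).Adj ⟨x, f x x'⟩ ⟨x', f x' x⟩ from
      Or.inr ⟨x, x', h, rfl, rfl⟩)

lemma glue_connected_s18 (hDT : ∀ x, (DT x).Preconnected) (hne : ∀ x, Nonempty (DI x)) :
    (glueTree D DI DT f).Connected := by
  have : Nonempty (Σ x : D.ι, DI x) := by
    obtain ⟨x⟩ := D.nonempty
    obtain ⟨u⟩ := hne x
    exact ⟨⟨x, u⟩⟩
  refine ⟨fun a b => ?_⟩
  obtain ⟨p⟩ := D.isTree.isConnected.preconnected a.1 b.1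
  have := glue_reach_aux (f := f) hDT p a.2 b.2
  simpa using this

lemma glue_adj_iff {a b : Σ x : D.ι, DI x} {e : Sym2 (Σ x : D.ι, DI x)}
    (h : ((glueTree D DI DT f) \ fromEdgeSet {e}).Adj a b) :
    (glueTree D DI DT f).Adj a b ∧ s(a, b) ≠ e := by
  rw [sdiff_adj, fromEdgeSet_adj, Set.mem_singleton_iff] at h
  exact ⟨h.1, fun hc => h.2 ⟨hc, (glueTree D DI DT f).ne_of_adj h.1⟩⟩

lemma glue_bridge {x y : D.ι} (h : D.tree.Adj x y) :
    (glueTree D DI DT f).IsBridge s(⟨x, f x y⟩, ⟨y, f y x⟩) := by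
  rw [isBridge_iff]
  apply cut_no_reach (fun z => (D.tree \ fromEdgeSet {s(x, y)}).Reachable x z.1)
  · rintro a b hab
    obtain ⟨hadj, hne'⟩ := glue_adj_iff hab
    rcases hadj with ⟨x', w, w', h', rfl, rfl⟩ | ⟨x', y', h', rfl, rfl⟩
    · exact Iff.rfl
    · have hxy : s(x', y') ≠ s(x, y) := by
        intro hc
        rcases Sym2.eq_iff.mp hc with ⟨rfl, rfl⟩ | ⟨rfl, rfl⟩
        · exact hne' rfl
        · exact hne' (Sym2.eq_swap)
      refine reach_congr (show (D.tree \ fromEdgeSet {s(x, y)}).Adj x' y' from ?_)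
      rw [sdiff_adj, fromEdgeSet_adj, Set.mem_singleton_iff]
      exact ⟨h', fun hc => hxy hc.1⟩
  · exact Reachable.refl x
  · have hb := isAcyclic_iff_forall_adj_isBridge.mp D.isTree.IsAcyclic h
    exact isBridge_iff.mp hb

variable (D DI DT f) in
/-- The reachability invariant inside the split piece. -/
def phi0 (x : D.ι) (u v : DI x) : DI x → Prop :=
  fun w => ((DT x) \ fromEdgeSet {s(u, v)}).Reachable u w

variable (D DI DT f) in
def psiI (x : D.ι) (u v : DI x) : D.ι → Prop :=
  fun a => ∃ b, D.tree.Adj x b ∧ phi0 D DI DT x u v (f x b) ∧ (avoid D.tree x).Reachable b a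

variable (D DI DT f) in
noncomputable def phiI (x : D.ι) (u v : DI x) : (Σ a : D.ι, DI a) → Prop :=
  fun z =>
    @dite _ (z.1 = x) (Classical.dec _) (fun hz => phi0 D DI DT x u v (hz ▸ z.2))
      (fun _ => psiI D DI DT f x u v z.1)

lemma phiI_self {x : D.ι} {u v : DI x} (w : DI x) :
    phiI D DI DT f x u v ⟨x, w⟩ ↔ phi0 D DI DT x u v w := by
  simp only [phiI]
  rw [dif_pos trivial]

lemma phiI_ne {x : D.ι} {u v : DI x} {a : D.ι} (ha : a ≠ x) (w : DI a) :
    phiI D DI DT f x u v ⟨a, w⟩ ↔ psiI D DI DT f x u v a := by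
  simp only [phiI]
  rw [dif_neg ha]

lemma internal_bridge (hDT : ∀ x, (DT x).IsAcyclic) {x : D.ι} {u v : DI x}
    (h : (DT x).Adj u v) :
    (glueTree D DI DT f).IsBridge s(⟨x, u⟩, ⟨x, v⟩) := by
  rw [isBridge_iff]
  apply cut_no_reach (phiI D DI DT f x u v)
  · rintro a b hab
    obtain ⟨hadj, hne'⟩ := glue_adj_iff hab
    rcases hadj with ⟨x', w, w', h', rfl, rfl⟩ | ⟨x', y', h', rfl, rfl⟩
    · by_cases hx : x' = x
      · subst hx
        rw [phiI_self, phiI_self]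
        refine reach_congr (show ((DT x') \ fromEdgeSet {s(u, v)}).Adj w w' from ?_)
        rw [sdiff_adj, fromEdgeSet_adj, Set.mem_singleton_iff]
        refine ⟨h', fun hc => hne' ?_⟩
        have := congrArg (Sym2.map (Sigma.mk x')) hc.1
        simpa [Sym2.map_pair_eq] using this
      · rw [phiI_ne hx, phiI_ne hx]
    · by_cases hx : x' = x
      · subst hx
        rw [phiI_self, phiI_ne (fun hc => h'.ne' hc)]
        constructor
        · intro hp
          exact ⟨y', h', hp, Reachable.refl y'⟩
        · rintro ⟨b, hxb, hp, hr⟩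
          obtain rfl := neighbor_unique D.isTree.IsAcyclic hxb h' hr
          exact hp
      · by_cases hy : y' = x
        · subst hy
          rw [phiI_ne hx, phiI_self]
          constructor
          · rintro ⟨b, hxb, hp, hr⟩
            obtain rfl := neighbor_unique D.isTree.IsAcyclic hxb h'.symm hr
            exact hp
          · intro hp
            exact ⟨x', h'.symm, hp, Reachable.refl x'⟩
        · rw [phiI_ne hx, phiI_ne hy]
          have hadj0 : (avoid D.tree x).Adj x' y' := ⟨h', hx, hy⟩
          constructor
          · rintro ⟨b, h1, h2, h3⟩
            exact ⟨b, h1, h2, h3.trans hadj0.reachable⟩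
          · rintro ⟨b, h1, h2, h3⟩
            exact ⟨b, h1, h2, h3.trans hadj0.symm.reachable⟩
  · exact (phiI_self u).mpr (Reachable.refl u)
  · rw [phiI_self]
    have hb := isAcyclic_iff_forall_adj_isBridge.mp (hDT x) h
    exact isBridge_iff.mp hb

lemma glue_isTree (hDT : ∀ x, (DT x).IsTree) : (glueTree D DI DT f).IsTree := by
  constructor
  · exact glue_connected_s18 (fun x => (hDT x).isConnected.preconnected)
      (fun x => (hDT x).isConnected.nonempty)
  · rw [isAcyclic_iff_forall_adj_isBridge]
    rintro a b (⟨x, w, w', h', rfl, rfl⟩ | ⟨x, y, h', rfl, rfl⟩)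
    · exact internal_bridge (fun x => (hDT x).IsAcyclic) h'
    · exact glue_bridge h'

end Glue

section Main

open GlueAux

/-- If each torso of a tree-decomposition `(B_x)` of `G` has a tree-decomposition `D_x`
of width at most `w` in which every adhesion set `B_x ∩ B_y` is contained in a bag,
then `G` has a tree-decomposition of width at most `w` all of whose bags are bags of
the decompositions `D_x`. -/
theorem glue_torso_decomps {V : Type*} [DecidableEq V] (G : SimpleGraph V)
    (D : TreeDecomp G) (w : ℕ)
    (Dx : ∀ x : D.ι, TreeDecomp (torso G D x))
    (hw : ∀ x : D.ι, (Dx x).widthLE w)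
    (hadh : ∀ x y : D.ι, D.tree.Adj x y → ∃ u : (Dx x).ι,
      ∀ (v : V) (hv : v ∈ D.bag x), v ∈ D.bag y → (⟨v, hv⟩ : {v : V // v ∈ D.bag x}) ∈ (Dx x).bag u) :
    ∃ D' : TreeDecomp G, D'.widthLE w ∧
      ∀ z : D'.ι, ∃ (x : D.ι) (u : (Dx x).ι),
        D'.bag z = ((Dx x).bag u).image Subtype.val := by
  classical
  have hch : ∀ x y : D.ι, ∃ u : (Dx x).ι, D.tree.Adj x y →
      ∀ (v : V) (hv : v ∈ D.bag x), v ∈ D.bag y →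
        (⟨v, hv⟩ : {v : V // v ∈ D.bag x}) ∈ (Dx x).bag u := by
    intro x y
    by_cases h : D.tree.Adj x y
    · obtain ⟨u, hu⟩ := hadh x y h
      exact ⟨u, fun _ => hu⟩
    · exact ⟨((Dx x).nonempty).some, fun h' => absurd h' h⟩
  choose f hf using hch
  let tree' := glueTree D (fun x => (Dx x).ι) (fun x => (Dx x).tree) f
  let bg : (Σ x : D.ι, (Dx x).ι) → Finset V := fun z => ((Dx z.1).bag z.2).image Subtype.val
  have mem_bg : ∀ (v : V) (z : Σ x : D.ι, (Dx x).ι),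
      v ∈ bg z ↔ ∃ hv : v ∈ D.bag z.1,
        (⟨v, hv⟩ : {v : V // v ∈ D.bag z.1}) ∈ (Dx z.1).bag z.2 := by
    intro v z
    simp only [bg, Finset.mem_image]
    constructor
    · rintro ⟨⟨a, ha⟩, hmem, rfl⟩; exact ⟨ha, hmem⟩
    · rintro ⟨hv, hmem⟩; exact ⟨⟨v, hv⟩, hmem, rfl⟩
  have hfint : Fintype (Σ x : D.ι, (Dx x).ι) := by
    haveI := D.fint
    haveI := fun x => (Dx x).fint
    infer_instance
  refine ⟨{ ι := Σ x : D.ι, (Dx x).ι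
            fint := hfint
            nonempty := ⟨⟨D.nonempty.some, (Dx D.nonempty.some).nonempty.some⟩⟩
            tree := tree'
            isTree := glue_isTree (fun x => (Dx x).isTree)
            bag := bg
            edge_mem := ?_
            support_conn := ?_ }, ?_, ?_⟩
  · -- edge_mem
    intro a b hab
    obtain ⟨x, ha, hb⟩ := D.edge_mem hab
    have hadj : (torso G D x).Adj ⟨a, ha⟩ ⟨b, hb⟩ :=
      ⟨fun hc => hab.ne (congrArg Subtype.val hc), Or.inl hab⟩
    obtain ⟨u, h1, h2⟩ := (Dx x).edge_mem hadj
    exact ⟨⟨x, u⟩, (mem_bg a ⟨x, u⟩).mpr ⟨ha, h1⟩, (mem_bg b ⟨x, u⟩).mpr ⟨hb, h2⟩⟩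
  · -- support_conn
    intro v
    set S : Set (Σ x : D.ι, (Dx x).ι) := {z | v ∈ bg z} with hS
    have L1 : ∀ (x : D.ι) (hv : v ∈ D.bag x) (u u' : (Dx x).ι)
        (hu : (⟨v, hv⟩ : {a : V // a ∈ D.bag x}) ∈ (Dx x).bag u)
        (hu' : (⟨v, hv⟩ : {a : V // a ∈ D.bag x}) ∈ (Dx x).bag u'),
        (tree'.induce S).Reachable ⟨⟨x, u⟩, (mem_bg v ⟨x, u⟩).mpr ⟨hv, hu⟩⟩
          ⟨⟨x, u'⟩, (mem_bg v ⟨x, u'⟩).mpr ⟨hv, hu'⟩⟩ := by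
      intro x hv u u' hu hu'
      have hc := ((Dx x).support_conn ⟨v, hv⟩).preconnected ⟨u, hu⟩ ⟨u', hu'⟩
      exact hc.map
        (⟨fun p => ⟨⟨x, p.1⟩, (mem_bg v ⟨x, p.1⟩).mpr ⟨hv, p.2⟩⟩,
         fun {a b} hab => Or.inl ⟨x, a.1, b.1, hab, rfl, rfl⟩⟩ :
         ((Dx x).tree.induce {w | (⟨v, hv⟩ : {a : V // a ∈ D.bag x}) ∈ (Dx x).bag w}) →g
           (tree'.induce S))
    have L2 : ∀ (a b : {x : D.ι | v ∈ D.bag x})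
        (p : (D.tree.induce {x : D.ι | v ∈ D.bag x}).Walk a b)
        (u : (Dx a.1).ι) (u' : (Dx b.1).ι)
        (hu : (⟨v, a.2⟩ : {c : V // c ∈ D.bag a.1}) ∈ (Dx a.1).bag u)
        (hu' : (⟨v, b.2⟩ : {c : V // c ∈ D.bag b.1}) ∈ (Dx b.1).bag u'),
        (tree'.induce S).Reachable ⟨⟨a.1, u⟩, (mem_bg v ⟨a.1, u⟩).mpr ⟨a.2, hu⟩⟩
          ⟨⟨b.1, u'⟩, (mem_bg v ⟨b.1, u'⟩).mpr ⟨b.2, hu'⟩⟩ := by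
      intro a b p
      induction p with
      | nil => exact fun u u' hu hu' => L1 _ _ u u' hu hu'
      | @cons a c b h q ih =>
        intro u u' hu hu'
        have hadj : D.tree.Adj a.1 c.1 := h
        have h1 : (⟨v, a.2⟩ : {x : V // x ∈ D.bag a.1}) ∈ (Dx a.1).bag (f a.1 c.1) :=
          hf a.1 c.1 hadj v a.2 c.2
        have h2 : (⟨v, c.2⟩ : {x : V // x ∈ D.bag c.1}) ∈ (Dx c.1).bag (f c.1 a.1) :=
          hf c.1 a.1 hadj.symm v c.2 a.2
        refine (L1 a.1 a.2 u (f a.1 c.1) hu h1).trans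
          (Reachable.trans ?_ (ih (f c.1 a.1) u' h2 hu'))
        refine SimpleGraph.Adj.reachable ?_
        show tree'.Adj ⟨a.1, f a.1 c.1⟩ ⟨c.1, f c.1 a.1⟩
        exact Or.inr ⟨a.1, c.1, hadj, rfl, rfl⟩
    rw [SimpleGraph.connected_iff]
    constructor
    · rintro ⟨⟨x, u⟩, hz⟩ ⟨⟨y, u'⟩, hz'⟩
      obtain ⟨hvx, hu⟩ := (mem_bg v ⟨x, u⟩).mp hz
      obtain ⟨hvy, hu'⟩ := (mem_bg v ⟨y, u'⟩).mp hz'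
      obtain ⟨p⟩ := (D.support_conn v).preconnected ⟨x, hvx⟩ ⟨y, hvy⟩
      exact L2 ⟨x, hvx⟩ ⟨y, hvy⟩ p u u' hu hu'
    · obtain ⟨⟨x, hvx⟩⟩ := (D.support_conn v).nonempty
      obtain ⟨⟨u, hu⟩⟩ := ((Dx x).support_conn ⟨v, hvx⟩).nonempty
      exact ⟨⟨⟨x, u⟩, (mem_bg v ⟨x, u⟩).mpr ⟨hvx, hu⟩⟩⟩
  · -- width
    intro z
    exact le_trans (Finset.card_image_le) (hw z.1 z.2)
  · -- bags are torso bags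
    intro z
    exact ⟨z.1, z.2, rfl⟩

end Main
end
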